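/- arXiv:2211.06670 — 7 statements merged into one kernel-verified Lean document; each statement's English description precedes it below -/
import Mathlib

section
/- Let G be a finite group and σ an automorphism of G of order 2 that is fixed-point-free, i.e. σ(x) = x implies x = 1. Then G is abelian of odd order and σ(x) = x⁻¹ for every x ∈ G. -/
/-- A finite group with a fixed-point-free automorphism of order 2 is abelian
of odd order, and the automorphism is inversion. -/
theorem fixed_point_free_involution (G : Type*) [Group G] [Finite G]
    (σ : MulAut G) (hord : orderOf σ = 2)
    (hfpf : ∀ x : G, σ x = x → x = 1) :
    (∀ a b : G, a * b = b * a) ∧ Odd (Nat.card G) ∧ ∀ x : G, σ x = x⁻¹ := by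
  have hσ2 : ∀ x : G, σ (σ x) = x := by
    intro x
    have : σ ^ 2 = 1 := by rw [← hord]; exact pow_orderOf_eq_one σ
    have h := congrArg (fun f : MulAut G => f x) this
    simpa [pow_succ, MulAut.mul_apply] using h
  -- the map x ↦ x⁻¹ * σ x is injective, hence surjective
  have hinj : Function.Injective (fun x : G => x⁻¹ * σ x) := by
    intro a b hab
    simp only at hab
    have h1 : σ b = b * (a⁻¹ * σ a) := by rw [hab]; group
    have : σ (b * a⁻¹) = b * a⁻¹ := by
      rw [map_mul, map_inv, h1]; group
    have := hfpf _ this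
    exact (mul_inv_eq_one.mp this).symm
  have hsurj : Function.Surjective (fun x : G => x⁻¹ * σ x) :=
    Finite.surjective_of_injective hinj
  have hinv : ∀ x : G, σ x = x⁻¹ := by
    intro g
    obtain ⟨x, hx⟩ := hsurj g
    simp only at hx
    subst hx
    rw [map_mul, map_inv, hσ2, mul_inv_rev, inv_inv]
  have hcomm : ∀ a b : G, a * b = b * a := by
    intro a b
    have h1 : σ (a * b) = σ a * σ b := map_mul σ a b
    rw [hinv, hinv, hinv, mul_inv_rev] at h1
    have := congrArg (·⁻¹) h1
    simpa using this
  refine ⟨hcomm, ?_, hinv⟩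
  have : Fintype G := Fintype.ofFinite G
  rw [Nat.card_eq_fintype_card, ← Nat.not_even_iff_odd]
  intro heven
  have : (2 : ℕ).Prime := Nat.prime_two
  obtain ⟨g, hg⟩ := exists_prime_orderOf_dvd_card (G := G) 2 (even_iff_two_dvd.mp heven)
  have hg2 : g⁻¹ = g := by
    have : g * g = 1 := by
      have := pow_orderOf_eq_one g
      rw [hg] at this
      simpa [pow_two] using this
    exact inv_eq_of_mul_eq_one_left this
  have : σ g = g := by rw [hinv, hg2]
  have := hfpf g this
  rw [this, orderOf_one] at hg
  norm_num at hg
end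

section
/- Let G be a finite group and σ an automorphism of G of order 3 that is fixed-point-free, i.e. σ(x) = x implies x = 1. Then G is nilpotent of nilpotency class at most 2. -/
/-- A finite group with a fixed-point-free automorphism of order 3 is nilpotent
of nilpotency class at most 2, i.e. the lower central series reaches ⊥ at step 2. -/
theorem fixed_point_free_order_three (G : Type*) [Group G] [Finite G]
    (σ : MulAut G) (hord : orderOf σ = 3)
    (hfpf : ∀ x : G, σ x = x → x = 1) :
    (⊤ : Subgroup G).lowerCentralSeries 2 = ⊥ := by
  have hσ3 : σ ^ 3 = 1 := by rw [← hord]; exact pow_orderOf_eq_one σ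
  have h3 : ∀ x : G, σ (σ (σ x)) = x := by
    intro x
    have h := congrArg (fun f : MulAut G => f x) hσ3
    simpa [pow_succ, MulAut.mul_apply, MulAut.one_apply] using h
  -- surjectivity of x ↦ x⁻¹ σ x
  have hinj : Function.Injective fun x : G => x⁻¹ * σ x := by
    intro a b hab
    dsimp only at hab
    have hfix : σ (b * a⁻¹) = b * a⁻¹ := by
      rw [map_mul, map_inv]
      calc σ b * (σ a)⁻¹ = b * (b⁻¹ * σ b) * (σ a)⁻¹ := by group
        _ = b * (a⁻¹ * σ a) * (σ a)⁻¹ := by rw [hab]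
        _ = b * a⁻¹ := by group
    have h1 := hfpf _ hfix
    have : b = a := mul_inv_eq_one.mp h1
    exact this.symm
  have hsurj : Function.Surjective fun x : G => x⁻¹ * σ x :=
    Finite.injective_iff_surjective.mp hinj
  -- the splitting identity
  have hS : ∀ g : G, g * σ g * σ (σ g) = 1 := by
    intro g
    obtain ⟨x, hx⟩ := hsurj g
    dsimp only at hx
    rw [← hx]
    simp only [map_mul, map_inv, h3]
    group
  have e2 : ∀ g : G, σ (σ g) = (σ g)⁻¹ * g⁻¹ := by
    intro g
    have h := hS g
    calc σ (σ g) = (g * σ g)⁻¹ * (g * σ g * σ (σ g)) := by group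
      _ = (g * σ g)⁻¹ * 1 := by rw [h]
      _ = (σ g)⁻¹ * g⁻¹ := by group
  have N2 : ∀ u v : G, u * v * σ u * σ v = v * σ v * u * σ u := by
    intro u v
    have h := hS (u * v)
    simp only [map_mul] at h
    rw [e2 u, e2 v] at h
    calc u * v * σ u * σ v
        = (u * v * (σ u * σ v) * ((σ u)⁻¹ * u⁻¹ * ((σ v)⁻¹ * v⁻¹))) * (v * σ v * u * σ u) := by
          group
      _ = 1 * (v * σ v * u * σ u) := by rw [← h]
      _ = v * σ v * u * σ u := one_mul _
  have C5 : ∀ u v : G, σ v * u * (σ v)⁻¹ = u * σ u * v⁻¹ * (σ u)⁻¹ * v := by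
    intro u v
    have h := N2 (σ v) u
    rw [e2 v] at h
    calc σ v * u * (σ v)⁻¹
        = (σ v * u * ((σ v)⁻¹ * v⁻¹) * σ u) * ((σ u)⁻¹ * v) := by group
      _ = (u * σ u * σ v * ((σ v)⁻¹ * v⁻¹)) * ((σ u)⁻¹ * v) := by rw [h]
      _ = u * σ u * v⁻¹ * (σ u)⁻¹ * v := by group
  have E1 : ∀ u v : G, u⁻¹ * (σ v)⁻¹ * u * σ v = σ u * v * (σ u)⁻¹ * v⁻¹ := by
    intro u v
    have h := C5 u v⁻¹
    simp only [map_inv, inv_inv] at h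
    calc u⁻¹ * (σ v)⁻¹ * u * σ v = u⁻¹ * ((σ v)⁻¹ * u * σ v) := by group
      _ = u⁻¹ * (u * σ u * v * (σ u)⁻¹ * v⁻¹) := by rw [h]
      _ = σ u * v * (σ u)⁻¹ * v⁻¹ := by group
  have E2 : ∀ u v : G,
      u⁻¹ * (σ v)⁻¹ * u * σ v = (σ (σ u))⁻¹ * (σ (σ v))⁻¹ * σ (σ u) * σ (σ v) := by
    intro u v
    have h2 := E1 (σ u)⁻¹ (σ (σ v⁻¹))
    simp only [map_inv, h3, inv_inv] at h2
    exact (E1 u v).trans h2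
  -- every commutator is central
  have hcent : ∀ x y z : G, z * (x * y * x⁻¹ * y⁻¹) = (x * y * x⁻¹ * y⁻¹) * z := by
    intro x y z
    obtain ⟨x0, hx0⟩ := hsurj z⁻¹
    dsimp only at hx0
    have hz : (σ x0)⁻¹ * x0 = z := by
      calc (σ x0)⁻¹ * x0 = ((x0⁻¹ * σ x0))⁻¹ := by group
        _ = (z⁻¹)⁻¹ := by rw [hx0]
        _ = z := inv_inv z
    have h1 := E2 (σ x⁻¹) (σ y⁻¹)
    simp only [map_inv, h3, inv_inv] at h1
    have h2 := E2 (σ x⁻¹) (σ (σ x0⁻¹))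
    simp only [map_inv, h3, inv_inv] at h2
    have h12 := E2 (σ x⁻¹) (σ y⁻¹ * σ (σ x0⁻¹))
    simp only [map_mul, map_inv, h3, inv_inv] at h12
    have hL : (σ x * x0 * (σ x)⁻¹ * x0⁻¹) * (x0 * (x * y * x⁻¹ * y⁻¹) * x0⁻¹)
        = (x * σ x0 * x⁻¹ * (σ x0)⁻¹) * (σ x0 * (x * y * x⁻¹ * y⁻¹) * (σ x0)⁻¹) := by
      calc (σ x * x0 * (σ x)⁻¹ * x0⁻¹) * (x0 * (x * y * x⁻¹ * y⁻¹) * x0⁻¹)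
          = (σ x * x0 * (σ x)⁻¹ * x0⁻¹) *
              (x0 * (σ x * σ (σ y) * (σ x)⁻¹ * (σ (σ y))⁻¹) * x0⁻¹) := by rw [h1]
        _ = σ x * ((σ (σ y))⁻¹ * x0⁻¹)⁻¹ * (σ x)⁻¹ * ((σ (σ y))⁻¹ * x0⁻¹) := by group
        _ = x * (y⁻¹ * (σ x0)⁻¹)⁻¹ * x⁻¹ * (y⁻¹ * (σ x0)⁻¹) := h12
        _ = (x * σ x0 * x⁻¹ * (σ x0)⁻¹) * (σ x0 * (x * y * x⁻¹ * y⁻¹) * (σ x0)⁻¹) := by group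
    rw [← h2] at hL
    have hkey : x0 * (x * y * x⁻¹ * y⁻¹) * x0⁻¹ = σ x0 * (x * y * x⁻¹ * y⁻¹) * (σ x0)⁻¹ :=
      mul_left_cancel hL
    calc z * (x * y * x⁻¹ * y⁻¹)
        = (σ x0)⁻¹ * (x0 * (x * y * x⁻¹ * y⁻¹) * x0⁻¹) * x0 := by rw [← hz]; group
      _ = (σ x0)⁻¹ * (σ x0 * (x * y * x⁻¹ * y⁻¹) * (σ x0)⁻¹) * x0 := by rw [hkey]
      _ = (x * y * x⁻¹ * y⁻¹) * ((σ x0)⁻¹ * x0) := by group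
      _ = (x * y * x⁻¹ * y⁻¹) * z := by rw [hz]
  -- commutator subgroup is central
  have hle : (⊤ : Subgroup G).lowerCentralSeries 1 ≤ Subgroup.center G := by
    rw [show (1:ℕ) = 0 + 1 from rfl, Subgroup.lowerCentralSeries_succ, Subgroup.lowerCentralSeries_zero, Subgroup.commutator_def]
    rw [Subgroup.closure_le]
    rintro w ⟨p, -, q, -, rfl⟩
    rw [SetLike.mem_coe, Subgroup.mem_center_iff]
    intro z
    exact hcent p q z
  rw [show (2:ℕ) = 1 + 1 from rfl, Subgroup.lowerCentralSeries_succ, Subgroup.commutator_def, eq_bot_iff]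
  rw [Subgroup.closure_le]
  rintro w ⟨p, hp, q, -, rfl⟩
  have hc := hle hp
  rw [Subgroup.mem_center_iff] at hc
  rw [SetLike.mem_coe, Subgroup.mem_bot]
  have := hc q
  calc p * q * p⁻¹ * q⁻¹ = (q * p) * p⁻¹ * q⁻¹ := by rw [this]
    _ = 1 := by group
end

section
/- Let G be a finite nonabelian simple group containing an element t of order 2, and let c be the order of the centralizer C_G(t) of t in G. Then the order of G is at most (c²)! . -/
open Finset

/-- A finite simple group embeds into the permutations of cosets of any proper subgroup. -/
private lemma bf_card_le_factorial_index {G : Type*} [Group G] [Finite G] [IsSimpleGroup G]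
    (H : Subgroup G) (hH : H ≠ ⊤) : Nat.card G ≤ Nat.factorial H.index := by
  classical
  have hker : (MulAction.toPermHom G (G ⧸ H)).ker = ⊥ := by
    rcases IsSimpleGroup.eq_bot_or_eq_top_of_normal H.normalCore inferInstance with h | h
    · rw [← Subgroup.normalCore_eq_ker, h]
    · exact absurd (top_le_iff.mp (h ▸ H.normalCore_le)) hH
  have hinj : Function.Injective (MulAction.toPermHom G (G ⧸ H)) :=
    ((MulAction.toPermHom G (G ⧸ H)).ker_eq_bot_iff).mp hker
  have := Fintype.ofFinite (G ⧸ H)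
  calc Nat.card G ≤ Nat.card (Equiv.Perm (G ⧸ H)) := Nat.card_le_card_of_injective _ hinj
    _ = Nat.factorial (Nat.card (G ⧸ H)) := by
        simp [Nat.card_eq_fintype_card, Fintype.card_perm]
    _ = Nat.factorial H.index := by rw [Subgroup.index_eq_card]

set_option maxHeartbeats 800000 in
/-- The key arithmetic estimate in the Brauer–Fowler argument. -/
private lemma bf_arith {c n N cg m : ℕ} (hc2 : 2 ≤ c) (hNpos : 0 < N)
    (hcn : N ≤ c * n) (hb : n * n ≤ (N - 1) * cg + n) (hcm : cg * m = N)
    (hbig : c ^ 3 < N) (hcgpos : 0 < cg) (hm' : c ^ 2 < m) : False := by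
  have z1 : (N : ℤ) ≤ (c : ℤ) * n := by exact_mod_cast hcn
  have z2 : (n : ℤ) * n ≤ ((N : ℤ) - 1) * cg + n := by
    have := hb
    zify [show (1:ℕ) ≤ N from hNpos] at this
    linarith
  have z3 : (cg : ℤ) * m = N := by exact_mod_cast hcm
  have z4 : (c : ℤ) ^ 2 + 1 ≤ m := by exact_mod_cast hm'
  have z5 : (2 : ℤ) ≤ c := by exact_mod_cast hc2
  have z6 : (c : ℤ) ^ 3 < N := by exact_mod_cast hbig
  have z7 : (1 : ℤ) ≤ cg := by exact_mod_cast hcgpos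
  have z8 : (1 : ℤ) ≤ N := by exact_mod_cast hNpos
  have zNc : (c : ℤ) < N := by nlinarith
  have e1 : (0 : ℤ) ≤ (c : ℤ) * n - N := by linarith
  have e2 : (0 : ℤ) ≤ (c : ℤ) * n + N - c := by linarith
  have key1 : (N : ℤ) * (N - c) ≤ (c : ℤ) ^ 2 * ((n : ℤ) * n) - (c : ℤ) ^ 2 * n := by
    nlinarith [mul_nonneg e1 e2]
  have key2 : (c : ℤ) ^ 2 * ((n : ℤ) * n) ≤ (c : ℤ) ^ 2 * (((N : ℤ) - 1) * cg + n) :=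
    mul_le_mul_of_nonneg_left z2 (by positivity)
  have key2' : (N : ℤ) * (N - c) ≤ (c : ℤ) ^ 2 * ((N : ℤ) - 1) * cg := by nlinarith
  have key3 : ((c : ℤ) ^ 2 + 1) * cg ≤ N := by
    nlinarith [mul_nonneg (by linarith : (0:ℤ) ≤ (m : ℤ) - ((c:ℤ)^2 + 1)) (by linarith : (0:ℤ) ≤ (cg:ℤ))]
  have key4 : ((c : ℤ) ^ 2 + 1) * ((N : ℤ) * (N - c)) ≤ (c : ℤ) ^ 2 * ((N : ℤ) - 1) * N := by
    calc ((c : ℤ) ^ 2 + 1) * ((N : ℤ) * (N - c))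
        ≤ ((c : ℤ) ^ 2 + 1) * ((c : ℤ) ^ 2 * ((N : ℤ) - 1) * cg) :=
          mul_le_mul_of_nonneg_left key2' (by positivity)
      _ = (c : ℤ) ^ 2 * ((N : ℤ) - 1) * (((c : ℤ) ^ 2 + 1) * cg) := by ring
      _ ≤ (c : ℤ) ^ 2 * ((N : ℤ) - 1) * N := by
          apply mul_le_mul_of_nonneg_left key3
          nlinarith
  have key5 : (N : ℤ) * N ≤ ((c : ℤ) ^ 3 + c - c ^ 2) * N := by nlinarith
  have key6 : (N : ℤ) ≤ (c : ℤ) ^ 3 + c - c ^ 2 :=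
    le_of_mul_le_mul_right key5 (by linarith)
  nlinarith

/-- Brauer–Fowler theorem: a finite nonabelian simple group with an involution `t`
whose centralizer has order `c` has order at most `(c^2)!`. -/
theorem brauer_fowler (G : Type*) [Group G] [Finite G] [IsSimpleGroup G]
    (hnab : ¬ ∀ a b : G, a * b = b * a) (t : G) (ht : orderOf t = 2) :
    Nat.card G ≤ Nat.factorial ((Nat.card (Subgroup.centralizer {t} : Subgroup G)) ^ 2) := by
  classical
  have _inst := Fintype.ofFinite G
  set c := Nat.card (Subgroup.centralizer ({t} : Set G)) with hcdef
  set N := Nat.card G with hNdef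
  have ht1 : t ≠ 1 := by
    intro h; rw [h, orderOf_one] at ht; omega
  have htt : t * t = 1 := by
    have := pow_orderOf_eq_one t; rwa [ht, pow_two] at this
  -- the center is trivial
  have hcenter : Subgroup.center G = ⊥ := by
    rcases IsSimpleGroup.eq_bot_or_eq_top_of_normal (Subgroup.center G) inferInstance with h | h
    · exact h
    · exact absurd (fun a b => by
        have ha : a ∈ Subgroup.center G := h ▸ Subgroup.mem_top a
        exact (Subgroup.mem_center_iff.mp ha b).symm) hnab
  -- c ≥ 2
  have hc2 : 2 ≤ c := by
    have htmem : t ∈ Subgroup.centralizer ({t} : Set G) :=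
      Subgroup.mem_centralizer_iff.mpr (by rintro y rfl; rfl)
    have h2 : orderOf (⟨t, htmem⟩ : Subgroup.centralizer ({t} : Set G)) = 2 := by
      rw [← Subgroup.orderOf_coe]; exact ht
    have hdvd : 2 ∣ c := h2 ▸ orderOf_dvd_natCard _
    have hcpos : 0 < c := Nat.card_pos
    omega
  have hNpos : 0 < N := Nat.card_pos
  -- involutions
  set I : Finset G := Finset.univ.filter (fun x => x ≠ 1 ∧ x * x = 1) with hIdef
  set n := I.card with hndef
  -- conjugates of t are involutions : N ≤ c * n
  have hcn : N ≤ c * n := by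
    have hstab : c = Nat.card (MulAction.stabilizer (ConjAct G) t) := by
      rw [hcdef, Subgroup.centralizer_eq_comap_stabilizer]
      exact Nat.card_congr (Equiv.subtypeEquiv ConjAct.toConjAct.toEquiv fun k => Iff.rfl)
    have horb : Nat.card (MulAction.orbit (ConjAct G) t) =
        (MulAction.stabilizer (ConjAct G) t).index := by
      rw [Nat.card_congr (MulAction.orbitEquivQuotientStabilizer (ConjAct G) t),
        Subgroup.index_eq_card]
    have hos : c * Nat.card (MulAction.orbit (ConjAct G) t) = N := by
      rw [horb, hstab, Subgroup.card_mul_index]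
      exact Nat.card_congr ConjAct.ofConjAct.toEquiv
    have hsub : Nat.card (MulAction.orbit (ConjAct G) t) ≤ n := by
      have hss : (MulAction.orbit (ConjAct G) t).toFinset ⊆ I := by
        intro x hx
        rw [Set.mem_toFinset, ConjAct.mem_orbit_conjAct] at hx
        obtain ⟨u, rfl⟩ := isConj_iff.mp hx.symm
        simp only [hIdef, mem_filter, mem_univ, true_and]
        constructor
        · intro h
          apply ht1
          have h2 : u⁻¹ * (u * t * u⁻¹) * u = u⁻¹ * 1 * u := by rw [h]
          simpa [mul_assoc] using h2
        · calc (u * t * u⁻¹) * (u * t * u⁻¹) = u * (t * t) * u⁻¹ := by group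
            _ = 1 := by rw [htt, mul_one, mul_inv_cancel]
      calc Nat.card (MulAction.orbit (ConjAct G) t)
          = (MulAction.orbit (ConjAct G) t).toFinset.card := by
            rw [Nat.card_eq_fintype_card, Set.toFinset_card]
        _ ≤ n := Finset.card_le_card hss
    calc N = c * Nat.card (MulAction.orbit (ConjAct G) t) := hos.symm
      _ ≤ c * n := Nat.mul_le_mul_left c hsub
  -- pair counting
  set f : G → ℕ := fun g => ((I ×ˢ I).filter (fun p => p.1 * p.2 = g)).card with hfdef
  have hsum : ∑ g : G, f g = n * n := by
    have h := Finset.card_eq_sum_card_fiberwise (s := I ×ˢ I) (t := (univ : Finset G))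
      (f := fun p : G × G => p.1 * p.2) (fun p _ => mem_univ _)
    rw [Finset.card_product] at h
    exact h.symm
  have hf1 : f 1 = n := by
    rw [hfdef, hndef]
    apply Finset.card_bij (fun p _ => p.1)
    · intro p hp
      simp only [mem_filter, mem_product] at hp
      exact hp.1.1
    · intro p hp q hq hpq
      have hpq' : p.1 = q.1 := hpq
      simp only [mem_filter, mem_product] at hp hq
      have h1 := hp.2
      rw [hpq'] at h1
      exact Prod.ext hpq' (mul_left_cancel (h1.trans hq.2.symm))
    · intro x hx
      refine ⟨(x, x), ?_, rfl⟩
      simp only [hIdef, mem_filter, mem_product, mem_univ, true_and] at hx ⊢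
      exact ⟨⟨hx, hx⟩, hx.2⟩
  have hnn : n ≤ n * n := Nat.le_mul_of_pos_left n (by
    by_contra h0
    push_neg at h0
    interval_cases n
    rw [mul_zero] at hcn
    omega)
  set s : Finset G := Finset.univ.erase 1 with hsdef
  have hscard : s.card = N - 1 := by
    rw [hsdef, Finset.card_erase_of_mem (mem_univ 1), Finset.card_univ, hNdef,
      Nat.card_eq_fintype_card]
  have hsum2 : ∑ g ∈ s, f g = n * n - n := by
    have h := Finset.add_sum_erase (univ : Finset G) f (mem_univ 1)
    rw [← hsdef] at h
    rw [hf1, hsum] at h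
    omega
  have hsne : s.Nonempty := by
    obtain ⟨x, hx⟩ := exists_ne (1 : G)
    exact ⟨x, Finset.mem_erase.mpr ⟨hx, mem_univ x⟩⟩
  obtain ⟨g, hgs, hgmax⟩ := Finset.exists_max_image s f hsne
  have hg1 : g ≠ 1 := (Finset.mem_erase.mp hgs).1
  have hbound : n * n - n ≤ (N - 1) * f g := by
    calc n * n - n = ∑ x ∈ s, f x := hsum2.symm
      _ ≤ ∑ _x ∈ s, f g := Finset.sum_le_sum (fun x hx => hgmax x hx)
      _ = (N - 1) * f g := by rw [Finset.sum_const, smul_eq_mul, hscard]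
  set Hg := Subgroup.centralizer ({g} : Set G) with hHgdef
  set cg := Nat.card Hg with hcgdef
  -- f g ≤ cg
  have hfg : f g ≤ cg := by
    set J : Finset G := Finset.univ.filter (fun x => x * g * x⁻¹ = g⁻¹) with hJdef
    have h1 : f g ≤ J.card := by
      apply Finset.card_le_card_of_injOn (fun p => p.1)
      · intro p hp
        simp only [hfdef, hIdef, mem_coe, mem_filter, mem_product, mem_univ, true_and] at hp
        obtain ⟨⟨⟨hp1ne, hp1sq⟩, ⟨hp2ne, hp2sq⟩⟩, hmul⟩ := hp
        have hinv1 : p.1⁻¹ = p.1 := inv_eq_of_mul_eq_one_right hp1sq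
        have hinv2 : p.2⁻¹ = p.2 := inv_eq_of_mul_eq_one_right hp2sq
        simp only [hJdef, mem_coe, mem_filter, mem_univ, true_and]
        rw [← hmul, mul_inv_rev, hinv1, hinv2, ← mul_assoc p.1 p.1 p.2, hp1sq, one_mul]
      · intro p hp q hq hpq
        have hpq' : p.1 = q.1 := hpq
        simp only [hfdef, mem_coe, mem_filter, mem_product] at hp hq
        have h1 := hp.2
        rw [hpq'] at h1
        exact Prod.ext hpq' (mul_left_cancel (h1.trans hq.2.symm))
    have h2 : J.card ≤ cg := by
      rcases J.eq_empty_or_nonempty with hJe | ⟨x₀, hx₀⟩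
      · rw [hJe]; simp
      · have hx₀' : x₀ * g * x₀⁻¹ = g⁻¹ := by
          simpa [hJdef] using hx₀
        have hmemmap : ∀ x ∈ J, x₀⁻¹ * x ∈ Hg := by
          intro x hx
          have hx' : x * g * x⁻¹ = g⁻¹ := by simpa [hJdef] using hx
          have key : x * g * x⁻¹ = x₀ * g * x₀⁻¹ := hx'.trans hx₀'.symm
          have h3 : x₀ * ((x₀⁻¹ * x) * g * (x₀⁻¹ * x)⁻¹) * x₀⁻¹ = x₀ * g * x₀⁻¹ := by
            rw [← key]; group
          have h4 : (x₀⁻¹ * x) * g * (x₀⁻¹ * x)⁻¹ = g :=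
            mul_left_cancel (mul_right_cancel h3)
          rw [hHgdef]
          refine Subgroup.mem_centralizer_iff.mpr ?_
          rintro y rfl
          exact (mul_inv_eq_iff_eq_mul.mp h4).symm
        have hinj : Function.Injective
            (fun x : {x // x ∈ J} => (⟨x₀⁻¹ * x.1, hmemmap x.1 x.2⟩ : Hg)) := by
          intro a b hab
          have h5 : x₀⁻¹ * a.1 = x₀⁻¹ * b.1 := congrArg (fun z : Hg => (z : G)) hab
          exact Subtype.ext (mul_left_cancel h5)
        calc J.card = Nat.card {x // x ∈ J} := by
              rw [Nat.card_eq_fintype_card, Fintype.card_coe]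
          _ ≤ Nat.card Hg := Nat.card_le_card_of_injective _ hinj
    exact le_trans h1 h2
  set m := Hg.index with hmdef
  have hcm : cg * m = N := Subgroup.card_mul_index Hg
  have hHgne : Hg ≠ ⊤ := by
    intro h
    have hgc : g ∈ Subgroup.center G :=
      Subgroup.centralizer_eq_top_iff_subset.mp h (Set.mem_singleton g)
    rw [hcenter, Subgroup.mem_bot] at hgc
    exact hg1 hgc
  by_cases hsmall : N ≤ c ^ 3
  · -- N ≤ c³ ≤ c²·(c²-1) ≤ (c²)!
    have e1 : c * c = c ^ 2 := (sq c).symm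
    have e2 : 2 * c ≤ c * c := Nat.mul_le_mul_right c hc2
    have e3 : c ≤ c ^ 2 - 1 := by omega
    have h1 : c ^ 3 ≤ c ^ 2 * (c ^ 2 - 1) := by
      calc c ^ 3 = c ^ 2 * c := by ring
        _ ≤ c ^ 2 * (c ^ 2 - 1) := Nat.mul_le_mul_left _ e3
    have h2 : c ^ 2 * (c ^ 2 - 1) ≤ Nat.factorial (c ^ 2) := by
      calc c ^ 2 * (c ^ 2 - 1) ≤ c ^ 2 * Nat.factorial (c ^ 2 - 1) :=
            Nat.mul_le_mul_left _ (Nat.self_le_factorial _)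
        _ = Nat.factorial (c ^ 2) := Nat.mul_factorial_pred (by positivity)
    exact le_trans hsmall (le_trans h1 h2)
  · push_neg at hsmall
    have hmle : m ≤ c ^ 2 := by
      by_contra hm'
      push_neg at hm'
      have hcgpos : 0 < cg := Nat.card_pos
      have hb : n * n ≤ (N - 1) * cg + n := by
        have h' : (N - 1) * f g ≤ (N - 1) * cg := Nat.mul_le_mul_left _ hfg
        omega
      exact bf_arith hc2 hNpos hcn hb hcm hsmall hcgpos hm'
    calc Nat.card G ≤ Nat.factorial m := bf_card_le_factorial_index Hg hHgne
      _ ≤ Nat.factorial (c ^ 2) := Nat.factorial_le hmle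
end

section
/- Let G be a finite group that can be generated by s elements, let N be a normal subgroup of G and π : G → G/N the quotient map. If y_1, …, y_s generate G/N, then there exist elements x_1, …, x_s of G with π(x_i) = y_i for all i such that x_1, …, x_s generate G. -/
open Subgroup Finset

section GaschuetzAux

variable {G : Type*} [Group G] [Fintype G] {s : ℕ} (N : Subgroup G) [N.Normal]

open scoped Classical

/-- lifts of `y` with all coordinates in `H` -/
private noncomputable def glifts (H : Subgroup G) (y : Fin s → G ⧸ N) : Finset (Fin s → G) :=
  Finset.univ.filter (fun x => (∀ i, x i ∈ H) ∧ ∀ i, QuotientGroup.mk' N (x i) = y i)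

/-- lifts of `y` generating exactly `H` -/
private noncomputable def ggens (H : Subgroup G) (y : Fin s → G ⧸ N) : Finset (Fin s → G) :=
  Finset.univ.filter
    (fun x => Subgroup.closure (Set.range x) = H ∧ ∀ i, QuotientGroup.mk' N (x i) = y i)

private lemma mem_glifts {H : Subgroup G} {y : Fin s → G ⧸ N} {x : Fin s → G} :
    x ∈ glifts N H y ↔ (∀ i, x i ∈ H) ∧ ∀ i, QuotientGroup.mk' N (x i) = y i := by
  rw [glifts, Finset.mem_filter]
  simp

private lemma mem_ggens {H : Subgroup G} {y : Fin s → G ⧸ N} {x : Fin s → G} :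
    x ∈ ggens N H y ↔
      Subgroup.closure (Set.range x) = H ∧ ∀ i, QuotientGroup.mk' N (x i) = y i := by
  rw [ggens, Finset.mem_filter]
  simp

private lemma card_glifts_eq_sum (H : Subgroup G) (y : Fin s → G ⧸ N) :
    (glifts N H y).card = ∑ K ∈ Finset.univ.filter (· ≤ H), (ggens N K y).card := by
  have hdisj : ∀ K ∈ Finset.univ.filter (· ≤ H), ∀ K' ∈ Finset.univ.filter (· ≤ H),
      K ≠ K' → Disjoint (ggens N K y) (ggens N K' y) := by
    intro K _ K' _ hne
    refine Finset.disjoint_left.2 ?_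
    intro x hx hx'
    exact hne (((mem_ggens N).1 hx).1.symm.trans ((mem_ggens N).1 hx').1)
  rw [show glifts N H y = (Finset.univ.filter (· ≤ H)).biUnion (fun K => ggens N K y) from ?_,
    Finset.card_biUnion hdisj]
  ext x
  simp only [Finset.mem_biUnion, Finset.mem_filter, Finset.mem_univ, true_and]
  constructor
  · intro hx
    obtain ⟨h1, h2⟩ := (mem_glifts N).1 hx
    refine ⟨Subgroup.closure (Set.range x), ?_, (mem_ggens N).2 ⟨rfl, h2⟩⟩
    exact (Subgroup.closure_le H).2 (Set.range_subset_iff.2 h1)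
  · rintro ⟨K, hK, hx⟩
    obtain ⟨h1, h2⟩ := (mem_ggens N).1 hx
    refine (mem_glifts N).2 ⟨fun i => hK ?_, h2⟩
    rw [← h1]
    exact Subgroup.subset_closure (Set.mem_range_self i)

/-- key counting: the number of lifts into `H` depends only on `H` among generating tuples. -/
private lemma card_glifts_const (H : Subgroup G) {y y' : Fin s → G ⧸ N}
    (hy : Subgroup.closure (Set.range y) = ⊤) (hy' : Subgroup.closure (Set.range y') = ⊤) :
    (glifts N H y).card = (glifts N H y').card := by
  by_cases hH : H.map (QuotientGroup.mk' N) = ⊤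
  · -- pick coordinatewise coset representatives in H
    have hrep : ∀ q : G ⧸ N, ∃ g : G, g ∈ H ∧ QuotientGroup.mk' N g = q := by
      intro q
      have : q ∈ H.map (QuotientGroup.mk' N) := hH ▸ Subgroup.mem_top q
      obtain ⟨g, hg, hgq⟩ := this
      exact ⟨g, hg, hgq⟩
    choose g hgH hgq using fun i => hrep (y i)
    choose g' hg'H hg'q using fun i => hrep (y' i)
    apply Finset.card_bij' (fun x _ => fun i => g' i * (g i)⁻¹ * x i)
      (fun x _ => fun i => g i * (g' i)⁻¹ * x i)
    · intro x hx
      obtain ⟨h1, h2⟩ := (mem_glifts N).1 hx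
      refine (mem_glifts N).2 ⟨fun i => H.mul_mem (H.mul_mem (hg'H i) (H.inv_mem (hgH i))) (h1 i),
        fun i => ?_⟩
      simp only [map_mul, map_inv, hgq, hg'q, h2]
      group
    · intro x hx
      obtain ⟨h1, h2⟩ := (mem_glifts N).1 hx
      refine (mem_glifts N).2 ⟨fun i => H.mul_mem (H.mul_mem (hgH i) (H.inv_mem (hg'H i))) (h1 i),
        fun i => ?_⟩
      simp only [map_mul, map_inv, hgq, hg'q, h2]
      group
    · intro x _; funext i; group
    · intro x _; funext i; group
  · -- both sides are empty
    have hempty : ∀ {z : Fin s → G ⧸ N}, Subgroup.closure (Set.range z) = ⊤ →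
        glifts N H z = ∅ := by
      intro z hz
      rw [Finset.eq_empty_iff_forall_notMem]
      intro x hx
      obtain ⟨h1, h2⟩ := (mem_glifts N).1 hx
      apply hH
      rw [eq_top_iff, ← hz, Subgroup.closure_le]
      rintro _ ⟨i, rfl⟩
      exact ⟨x i, h1 i, h2 i⟩
    rw [hempty hy, hempty hy']

private lemma card_ggens_const (H : Subgroup G) {y y' : Fin s → G ⧸ N}
    (hy : Subgroup.closure (Set.range y) = ⊤) (hy' : Subgroup.closure (Set.range y') = ⊤) :
    (ggens N H y).card = (ggens N H y').card := by
  revert y y' hy hy'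
  apply WellFoundedLT.induction H
  intro H ih y y' hy hy'
  have hsplit : Finset.univ.filter (· ≤ H)
      = insert H (Finset.univ.filter (· < H)) := by
    ext K
    simp only [Finset.mem_filter, Finset.mem_univ, true_and, Finset.mem_insert]
    constructor
    · intro h
      rcases lt_or_eq_of_le h with h | h
      · exact Or.inr h
      · exact Or.inl h
    · rintro (rfl | h)
      · exact le_refl _
      · exact le_of_lt h
  have hnot : H ∉ Finset.univ.filter (· < H) := by simp
  have h1 := card_glifts_eq_sum N H y
  have h2 := card_glifts_eq_sum N H y'
  rw [hsplit, Finset.sum_insert hnot] at h1 h2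
  have hrest : ∑ K ∈ Finset.univ.filter (· < H), (ggens N K y).card
      = ∑ K ∈ Finset.univ.filter (· < H), (ggens N K y').card := by
    refine Finset.sum_congr rfl fun K hK => ?_
    exact ih K (by simpa using hK) hy hy'
  have hl := card_glifts_const N H hy hy'
  omega

end GaschuetzAux

/-- Gaschütz's lifting lemma: if a finite group `G` is generated by `s` elements
and `(y i)` is a generating `s`-tuple of `G ⧸ N`, then it lifts to a generating
`s`-tuple of `G`. -/
theorem gaschuetz_lifting (G : Type*) [Group G] [Finite G] (s : ℕ)
    (N : Subgroup G) [N.Normal]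
    (hG : ∃ f : Fin s → G, Subgroup.closure (Set.range f) = ⊤)
    (y : Fin s → G ⧸ N)
    (hy : Subgroup.closure (Set.range y) = ⊤) :
    ∃ x : Fin s → G, (∀ i, QuotientGroup.mk' N (x i) = y i) ∧
      Subgroup.closure (Set.range x) = ⊤ := by
  classical
  cases nonempty_fintype G
  obtain ⟨f, hf⟩ := hG
  set y₀ : Fin s → G ⧸ N := fun i => QuotientGroup.mk' N (f i) with hy₀def
  have hy₀ : Subgroup.closure (Set.range y₀) = ⊤ := by
    have : Set.range y₀ = (QuotientGroup.mk' N) '' (Set.range f) := by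
      ext q; simp [hy₀def, Set.range_comp]
    rw [this, ← MonoidHom.map_closure, hf]
    exact Subgroup.map_top_of_surjective _ (QuotientGroup.mk'_surjective N)
  have hmem : f ∈ ggens N ⊤ y₀ := (mem_ggens N).2 ⟨hf, fun i => rfl⟩
  have hpos : 0 < (ggens N ⊤ y).card := by
    rw [card_ggens_const N ⊤ hy hy₀]
    exact Finset.card_pos.2 ⟨f, hmem⟩
  obtain ⟨x, hx⟩ := Finset.card_pos.1 hpos
  obtain ⟨h1, h2⟩ := (mem_ggens N).1 hx
  exact ⟨x, h2, h1⟩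
end

section
/- Let G be a finite group that can be generated by s elements, let N be a normal subgroup of G and π : G → G/N the quotient map. For a generating s-tuple (y_1, …, y_s) of G/N, let L(y_1, …, y_s) be the number of s-tuples (x_1, …, x_s) of elements of G with π(x_i) = y_i for all i that generate G. Then L(y_1, …, y_s) = φ_G(s) / φ_{G/N}(s) for every generating s-tuple (y_1, …, y_s) of G/N; in particular this number is positive and independent of the chosen tuple. -/
open Subgroup Set Finset

/-- Hall's Euler function for groups: `eulerPhiGroup G s` is the number of
ordered `s`-tuples of elements of `G` that generate `G`. -/
noncomputable def eulerPhiGroup (G : Type*) [Group G] (s : ℕ) : ℕ :=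
  Nat.card {x : Fin s → G // Subgroup.closure (Set.range x) = ⊤}

/-- Number of `s`-tuples lifting `y` whose closure is exactly `H`. -/
noncomputable def gaschuetzL {G : Type*} [Group G] (N : Subgroup G) [N.Normal]
    (s : ℕ) (H : Subgroup G) (y : Fin s → G ⧸ N) : ℕ :=
  Nat.card {x : Fin s → G // (∀ i, QuotientGroup.mk' N (x i) = y i) ∧
    Subgroup.closure (Set.range x) = H}

lemma gaschuetz_fiber_card {G : Type*} [Group G] (N : Subgroup G) [N.Normal] (H : Subgroup G)
    (hH : H.map (QuotientGroup.mk' N) = ⊤) (q : G ⧸ N) :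
    Nat.card {g : G // QuotientGroup.mk' N g = q ∧ g ∈ H} = Nat.card ↥(H ⊓ N) := by
  have hq : q ∈ H.map (QuotientGroup.mk' N) := hH ▸ mem_top q
  obtain ⟨g0, hg0H, hg0⟩ := Subgroup.mem_map.mp hq
  have key : ∀ g : G, QuotientGroup.mk' N g = 1 ↔ g ∈ N := fun g =>
    QuotientGroup.eq_one_iff g
  apply Nat.card_congr
  refine ⟨fun g => ⟨g0⁻¹ * g.1, ?_⟩, fun n => ⟨g0 * n.1, ?_, ?_⟩, ?_, ?_⟩
  · refine Subgroup.mem_inf.mpr ⟨mul_mem (inv_mem hg0H) g.2.2, ?_⟩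
    rw [← key, map_mul, map_inv, hg0, g.2.1, inv_mul_cancel]
  · rw [map_mul, hg0, (key _).mpr (Subgroup.mem_inf.mp n.2).2, mul_one]
  · exact mul_mem hg0H (Subgroup.mem_inf.mp n.2).1
  · intro g; simp; rfl
  · intro n; simp

/-- Any lift of a generating tuple generates a subgroup mapping onto the quotient. -/
lemma gaschuetz_map_top {G : Type*} [Group G] {s : ℕ} (N : Subgroup G) [N.Normal]
    {z : Fin s → G ⧸ N} (hz : Subgroup.closure (Set.range z) = ⊤)
    {x : Fin s → G} (hx : ∀ i, QuotientGroup.mk' N (x i) = z i) :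
    (Subgroup.closure (Set.range x)).map (QuotientGroup.mk' N) = ⊤ := by
  have hcomp : (QuotientGroup.mk' N) ∘ x = z := funext hx
  rw [MonoidHom.map_closure, ← Set.range_comp, hcomp, hz]

lemma gaschuetz_key {G : Type*} [Group G] [Finite G] {s : ℕ} (N : Subgroup G) [N.Normal]
    (H : Subgroup G) {y y' : Fin s → G ⧸ N}
    (hy : Subgroup.closure (Set.range y) = ⊤) (hy' : Subgroup.closure (Set.range y') = ⊤) :
    gaschuetzL N s H y = gaschuetzL N s H y' := by
  classical
  letI : Fintype G := Fintype.ofFinite G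
  letI : Fintype (Subgroup G) := Fintype.ofFinite _
  -- the counting identity
  have hcount : ∀ (H : Subgroup G), H.map (QuotientGroup.mk' N) = ⊤ →
      ∀ z : Fin s → G ⧸ N,
      ∑ K ∈ (Finset.univ (α := Subgroup G)).filter (· ≤ H), gaschuetzL N s K z
        = Nat.card ↥(H ⊓ N) ^ s := by
    intro H hH z
    set π := QuotientGroup.mk' N with hπ
    set A : Finset (Fin s → G) :=
      Finset.univ.filter (fun x => (∀ i, π (x i) = z i) ∧ ∀ i, x i ∈ H) with hA
    have h1 : A.card = Nat.card ↥(H ⊓ N) ^ s := by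
      have e1 : {x : Fin s → G // (∀ i, π (x i) = z i) ∧ ∀ i, x i ∈ H} ≃
          ∀ i : Fin s, {g : G // π g = z i ∧ g ∈ H} := by
        refine (Equiv.subtypeEquivRight (fun x => ?_)).trans Equiv.subtypePiEquivPi
        exact (forall_and).symm
      rw [← Fintype.card_subtype, ← Nat.card_eq_fintype_card, Nat.card_congr e1, Nat.card_pi]
      rw [Finset.prod_congr rfl (fun i _ => gaschuetz_fiber_card N H hH (z i)),
        Finset.prod_const, Finset.card_univ, Fintype.card_fin]
    have h2 : A.card = ∑ K ∈ (Finset.univ (α := Subgroup G)).filter (· ≤ H),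
        (A.filter (fun x => Subgroup.closure (Set.range x) = K)).card := by
      refine Finset.card_eq_sum_card_fiberwise (fun x hx => ?_)
      simp only [hA, Finset.mem_filter, Finset.mem_univ, true_and] at hx ⊢
      exact Finset.mem_coe.mpr (Finset.mem_filter.mpr ⟨Finset.mem_univ _, (Subgroup.closure_le H).mpr (Set.range_subset_iff.mpr (Finset.mem_filter.mp (show x ∈ A from hx)).2.2)⟩)
    have h3 : ∀ K ∈ (Finset.univ (α := Subgroup G)).filter (· ≤ H),
        (A.filter (fun x => Subgroup.closure (Set.range x) = K)).card = gaschuetzL N s K z := by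
      intro K hK
      simp only [Finset.mem_filter, Finset.mem_univ, true_and] at hK
      rw [gaschuetzL, Nat.card_eq_fintype_card, Fintype.card_subtype]
      congr 1
      ext x
      simp only [hA, Finset.filter_filter, Finset.mem_filter, Finset.mem_univ, true_and]
      constructor
      · rintro ⟨⟨hlift, _⟩, hcl⟩; exact ⟨hlift, hcl⟩
      · rintro ⟨hlift, hcl⟩
        exact ⟨⟨hlift, fun i => hK (hcl ▸ Subgroup.subset_closure (Set.mem_range_self i))⟩, hcl⟩
    rw [← h1, h2]
    exact Finset.sum_congr rfl (fun K hK => (h3 K hK).symm)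
  suffices h : ∀ n (H : Subgroup G), Nat.card H = n → gaschuetzL N s H y = gaschuetzL N s H y' by
    exact h _ H rfl
  intro n
  induction n using Nat.strong_induction_on with
  | _ n ih =>
  intro H hn
  by_cases hH : H.map (QuotientGroup.mk' N) = ⊤
  · have hsplit : ∀ z : Fin s → G ⧸ N,
        ∑ K ∈ (Finset.univ (α := Subgroup G)).filter (· ≤ H), gaschuetzL N s K z
        = gaschuetzL N s H z +
          ∑ K ∈ (Finset.univ (α := Subgroup G)).filter (· < H), gaschuetzL N s K z := by
      intro z
      have hset : (Finset.univ (α := Subgroup G)).filter (· ≤ H)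
          = insert H ((Finset.univ (α := Subgroup G)).filter (· < H)) := by
        ext K
        simp only [Finset.mem_filter, Finset.mem_univ, true_and, Finset.mem_insert]
        rw [le_iff_eq_or_lt]
      rw [hset, Finset.sum_insert (by simp)]
    have hlt : ∀ K : Subgroup G, K < H → gaschuetzL N s K y = gaschuetzL N s K y' := by
      intro K hK
      refine ih (Nat.card K) ?_ K rfl
      rw [← hn, ← SetLike.coe_sort_coe K, ← SetLike.coe_sort_coe H,
        Nat.card_coe_set_eq, Nat.card_coe_set_eq]
      exact Set.ncard_lt_ncard (SetLike.coe_ssubset_coe.mpr hK) (Set.toFinite _)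
    have e1 := hcount H hH y
    have e2 := hcount H hH y'
    rw [hsplit] at e1 e2
    have heq : ∑ K ∈ (Finset.univ (α := Subgroup G)).filter (· < H), gaschuetzL N s K y
        = ∑ K ∈ (Finset.univ (α := Subgroup G)).filter (· < H), gaschuetzL N s K y' := by
      refine Finset.sum_congr rfl (fun K hK => ?_)
      simp only [Finset.mem_filter, Finset.mem_univ, true_and] at hK
      exact hlt K hK
    omega
  · have hz : ∀ z : Fin s → G ⧸ N, Subgroup.closure (Set.range z) = ⊤ →
        gaschuetzL N s H z = 0 := by
      intro z hzgen
      have he : IsEmpty {x : Fin s → G // (∀ i, QuotientGroup.mk' N (x i) = z i) ∧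
          Subgroup.closure (Set.range x) = H} :=
        ⟨fun x => hH (x.2.2 ▸ gaschuetz_map_top N hzgen x.2.1)⟩
      rw [gaschuetzL]
      exact @Nat.card_of_isEmpty _ he
    rw [hz y hy, hz y' hy']

/-- Gaschütz's theorem: let `G` be a finite group generated by `s` elements and
`N` a normal subgroup. For every generating `s`-tuple `y` of `G ⧸ N`, the number
of generating `s`-tuples of `G` lifting `y` equals `φ_G(s) / φ_{G⧸N}(s)`; in
particular it is positive and independent of `y`. -/
theorem gaschuetz_euler_function (G : Type*) [Group G] [Finite G] (s : ℕ)
    (N : Subgroup G) [N.Normal]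
    (hG : ∃ f : Fin s → G, Subgroup.closure (Set.range f) = ⊤)
    (y : Fin s → G ⧸ N)
    (hy : Subgroup.closure (Set.range y) = ⊤) :
    Nat.card {x : Fin s → G // (∀ i, QuotientGroup.mk' N (x i) = y i) ∧
        Subgroup.closure (Set.range x) = ⊤}
      = eulerPhiGroup G s / eulerPhiGroup (G ⧸ N) s ∧
    0 < Nat.card {x : Fin s → G // (∀ i, QuotientGroup.mk' N (x i) = y i) ∧
        Subgroup.closure (Set.range x) = ⊤} := by
  classical
  letI : Fintype G := Fintype.ofFinite G
  letI : Fintype (G ⧸ N) := Fintype.ofFinite _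
  show gaschuetzL N s ⊤ y = eulerPhiGroup G s / eulerPhiGroup (G ⧸ N) s ∧
    0 < gaschuetzL N s ⊤ y
  set π := QuotientGroup.mk' N with hπ
  set Qgens : Finset (Fin s → G ⧸ N) :=
    Finset.univ.filter (fun z => Subgroup.closure (Set.range z) = ⊤) with hQgens
  have hphiQ : eulerPhiGroup (G ⧸ N) s = Qgens.card := by
    rw [eulerPhiGroup, Nat.card_eq_fintype_card, Fintype.card_subtype]
  have hphiG : eulerPhiGroup G s = Qgens.card * gaschuetzL N s ⊤ y := by
    set B : Finset (Fin s → G) :=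
      Finset.univ.filter (fun x => Subgroup.closure (Set.range x) = ⊤) with hB
    have hBcard : eulerPhiGroup G s = B.card := by
      rw [eulerPhiGroup, Nat.card_eq_fintype_card, Fintype.card_subtype]
    have hfib : B.card = ∑ z ∈ (Finset.univ : Finset (Fin s → G ⧸ N)),
        (B.filter (fun x => π ∘ x = z)).card :=
      Finset.card_eq_sum_card_fiberwise (fun x _ => Finset.mem_univ _)
    have hval : ∀ z : Fin s → G ⧸ N, (B.filter (fun x => π ∘ x = z)).card
        = if Subgroup.closure (Set.range z) = ⊤ then gaschuetzL N s ⊤ y else 0 := by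
      intro z
      by_cases hzgen : Subgroup.closure (Set.range z) = ⊤
      · rw [if_pos hzgen, ← gaschuetz_key N ⊤ hzgen hy]
        rw [gaschuetzL, Nat.card_eq_fintype_card, Fintype.card_subtype]
        congr 1
        ext x
        simp only [hB, Finset.filter_filter, Finset.mem_filter, Finset.mem_univ, true_and,
          funext_iff, Function.comp_apply]
        tauto
      · rw [if_neg hzgen]
        rw [Finset.card_eq_zero, Finset.filter_eq_empty_iff]
        intro x hx
        simp only [hB, Finset.mem_filter, Finset.mem_univ, true_and] at hx
        intro hcomp
        apply hzgen
        rw [← hcomp, Set.range_comp, ← MonoidHom.map_closure, hx,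
          Subgroup.map_top_of_surjective _ (QuotientGroup.mk'_surjective N)]
    rw [hBcard, hfib]
    rw [Finset.sum_congr rfl (fun z _ => hval z), ← Finset.sum_filter]
    rw [Finset.sum_const, smul_eq_mul]
  have hQpos : 0 < Qgens.card := by
    refine Finset.card_pos.mpr ⟨y, ?_⟩
    simp [hQgens, hy]
  have hGpos : 0 < eulerPhiGroup G s := by
    obtain ⟨f, hf⟩ := hG
    rw [eulerPhiGroup]
    exact Nat.card_pos_iff.mpr ⟨⟨⟨f, hf⟩⟩, inferInstance⟩
  have hLpos : 0 < gaschuetzL N s ⊤ y := by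
    rcases Nat.eq_zero_or_pos (gaschuetzL N s ⊤ y) with h | h
    · rw [h, mul_zero] at hphiG; omega
    · exact h
  refine ⟨?_, hLpos⟩
  rw [hphiG, hphiQ, Nat.mul_div_cancel_left _ hQpos]
end

section
/- Let G be a finite group and let H and K be subnormal subgroups of G. Then the subgroup generated by H and K is a subnormal subgroup of G. -/
/-- A subgroup `H` of `G` is subnormal if there is a finite chain
`H = c 0 ⊴ c 1 ⊴ … ⊴ c n = G` in which each term is a normal subgroup of the
next one. -/
def Subgroup.IsSubnormalChain {G : Type*} [Group G] (H : Subgroup G) : Prop :=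
  ∃ (n : ℕ) (c : Fin (n + 1) → Subgroup G),
    c 0 = H ∧ c (Fin.last n) = ⊤ ∧
    ∀ i : Fin n, c i.castSucc ≤ c i.succ ∧
      ((c i.castSucc).subgroupOf (c i.succ)).Normal


namespace WielandtAux

variable {G : Type*} [Group G]

/-- `H` is normal in `K` (both subgroups of ambient `G`). -/
def NormalIn (H K : Subgroup G) : Prop :=
  H ≤ K ∧ ∀ k ∈ K, ∀ h ∈ H, k * h * k⁻¹ ∈ H

/-- Relative subnormality via finite chains, inductively. -/
inductive SubnormalIn : Subgroup G → Subgroup G → Prop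
  | refl (H : Subgroup G) : SubnormalIn H H
  | step {H K L : Subgroup G} : SubnormalIn H K → NormalIn K L → SubnormalIn H L

theorem NormalIn.le {H K : Subgroup G} (h : NormalIn H K) : H ≤ K := h.1

theorem normalIn_of_le_normalizer {H K : Subgroup G} (h1 : H ≤ K)
    (h2 : K ≤ Subgroup.normalizer (H : Set G)) : NormalIn H K := by
  refine ⟨h1, fun k hk h hh => ?_⟩
  have := (Subgroup.mem_normalizer_iff.mp (h2 hk) h).mp hh
  simpa [mul_assoc] using this

theorem NormalIn.refl (H : Subgroup G) : NormalIn H H :=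
  normalIn_of_le_normalizer le_rfl Subgroup.le_normalizer

theorem NormalIn.inf_right {H K : Subgroup G} (h : NormalIn H K) (L : Subgroup G) :
    NormalIn (H ⊓ L) (K ⊓ L) := by
  refine ⟨inf_le_inf_right L h.1, fun k hk x hx => ?_⟩
  exact ⟨h.2 k hk.1 x hx.1, (K ⊓ L).mul_mem ((K ⊓ L).mul_mem hk ⟨h.1 hx.1, hx.2⟩) (inv_mem hk) |>.2⟩

theorem SubnormalIn.le {H K : Subgroup G} (h : SubnormalIn H K) : H ≤ K := by
  induction h with
  | refl => exact le_rfl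
  | step _ h2 ih => exact ih.trans h2.1

theorem SubnormalIn.trans {H K L : Subgroup G} (h1 : SubnormalIn H K)
    (h2 : SubnormalIn K L) : SubnormalIn H L := by
  induction h2 with
  | refl => exact h1
  | step _ hn ih => exact ih.step hn

theorem NormalIn.subnormalIn {H K : Subgroup G} (h : NormalIn H K) : SubnormalIn H K :=
  (SubnormalIn.refl H).step h

/-- Restriction: if `H ⊴⊴ T` and `H ≤ L ≤ T` then `H ⊴⊴ L`. -/
theorem SubnormalIn.inf_right {H T : Subgroup G} (h : SubnormalIn H T) (L : Subgroup G) :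
    SubnormalIn (H ⊓ L) (T ⊓ L) := by
  induction h with
  | refl => exact SubnormalIn.refl _
  | step _ hn ih => exact ih.step (hn.inf_right L)

theorem SubnormalIn.of_le {H T L : Subgroup G} (h : SubnormalIn H T) (h1 : H ≤ L)
    (h2 : L ≤ T) : SubnormalIn H L := by
  have := h.inf_right L
  rwa [inf_eq_left.mpr h1, inf_eq_right.mpr h2] at this

/-- Penultimate extraction. -/
theorem SubnormalIn.eq_or_exists {H T : Subgroup G} (h : SubnormalIn H T) :
    H = T ∨ ∃ P, P ≠ T ∧ NormalIn P T ∧ SubnormalIn H P := by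
  induction h with
  | refl => exact Or.inl rfl
  | @step K L h1 hn ih =>
    by_cases hKL : K = L
    · subst hKL
      exact ih
    · exact Or.inr ⟨K, hKL, hn, h1⟩

section Hom
variable {Q : Type*} [Group Q] (f : G →* Q)

theorem NormalIn.map {H K : Subgroup G} (h : NormalIn H K) :
    NormalIn (H.map f) (K.map f) := by
  refine ⟨Subgroup.map_mono h.1, ?_⟩
  rintro _ ⟨k, hk, rfl⟩ _ ⟨x, hx, rfl⟩
  exact ⟨k * x * k⁻¹, h.2 k hk x hx, by simp⟩

theorem SubnormalIn.map {H K : Subgroup G} (h : SubnormalIn H K) :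
    SubnormalIn (H.map f) (K.map f) := by
  induction h with
  | refl => exact SubnormalIn.refl _
  | step _ hn ih => exact ih.step (hn.map f)

theorem NormalIn.comap {H K : Subgroup Q} (h : NormalIn H K) :
    NormalIn (H.comap f) (K.comap f) := by
  refine ⟨Subgroup.comap_mono h.1, fun k hk x hx => ?_⟩
  simp only [Subgroup.mem_comap, map_mul, map_inv] at *
  exact h.2 _ hk _ hx

theorem SubnormalIn.comap {H K : Subgroup Q} (h : SubnormalIn H K) :
    SubnormalIn (H.comap f) (K.comap f) := by
  induction h with
  | refl => exact SubnormalIn.refl _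
  | step _ hn ih => exact ih.step (hn.comap f)

end Hom

/-- Conversion to the chain definition. -/
theorem isSubnormal_of_subnormalIn {H : Subgroup G} (h : SubnormalIn H ⊤) :
    H.IsSubnormalChain := by
  suffices hgen : ∀ H T : Subgroup G, SubnormalIn H T →
      ∃ (n : ℕ) (c : Fin (n + 1) → Subgroup G),
        c 0 = H ∧ c (Fin.last n) = T ∧
        ∀ i : Fin n, c i.castSucc ≤ c i.succ ∧
          ((c i.castSucc).subgroupOf (c i.succ)).Normal by
    exact hgen H ⊤ h
  intro H T h
  induction h with
  | refl => exact ⟨0, fun _ => H, rfl, rfl, fun i => i.elim0⟩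
  | @step K L h1 hn ih =>
    obtain ⟨n, c, hc0, hcl, hstep⟩ := ih
    refine ⟨n + 1, Fin.snoc c L, ?_, by simp, fun i => ?_⟩
    · rw [show (0 : Fin (n+2)) = (0 : Fin (n+1)).castSucc from rfl, Fin.snoc_castSucc, hc0]
    induction i using Fin.lastCases with
    | last =>
      have h1' : (Fin.snoc c L : Fin (n+2) → Subgroup G) (Fin.last n).castSucc = K := by
        simp [Fin.snoc_castSucc, hcl]
      have h2' : (Fin.snoc c L : Fin (n+2) → Subgroup G) (Fin.last (n+1)) = L := by simp
      rw [show (Fin.last n).succ = Fin.last (n+1) from rfl, h1', h2']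
      refine ⟨hn.1, ⟨?_⟩⟩
      rintro ⟨x, hxL⟩ hx ⟨g, hgL⟩
      simp only [Subgroup.mem_subgroupOf] at *
      exact hn.2 g hgL x hx
    | cast j =>
      have e1 : (Fin.snoc c L : Fin (n+2) → Subgroup G) j.castSucc.castSucc = c j.castSucc := by
        simp
      have e2 : (Fin.snoc c L : Fin (n+2) → Subgroup G) j.castSucc.succ = c j.succ := by
        rw [show j.castSucc.succ = j.succ.castSucc from rfl, Fin.snoc_castSucc]
      rw [e1, e2]
      exact hstep j

theorem subnormalIn_of_isSubnormal {H : Subgroup G} (h : H.IsSubnormalChain) :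
    SubnormalIn H ⊤ := by
  obtain ⟨n, c, hc0, hcl, hstep⟩ := h
  have key : ∀ i : Fin (n + 1), SubnormalIn H (c i) := by
    intro i
    induction i using Fin.induction with
    | zero => rw [hc0]; exact SubnormalIn.refl H
    | succ j ih =>
      refine ih.step ⟨(hstep j).1, ?_⟩
      intro k hk x hx
      have := (hstep j).2.conj_mem ⟨x, (hstep j).1 hx⟩ (by simpa [Subgroup.mem_subgroupOf]) ⟨k, hk⟩
      simpa [Subgroup.mem_subgroupOf] using this
  rw [← hcl]
  exact key (Fin.last n)

/-! ### Conjugation -/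

/-- Conjugation image of an element criterion, stated as a subgroup. -/
def conjSub (t : G) (A : Subgroup G) : Subgroup G where
  carrier := {x | t⁻¹ * x * t ∈ A}
  one_mem' := by simpa using A.one_mem
  mul_mem' := by
    intro a b ha hb
    have : (t⁻¹ * a * t) * (t⁻¹ * b * t) ∈ A := A.mul_mem ha hb
    simpa [mul_assoc] using this
  inv_mem' := by
    intro a ha
    have : (t⁻¹ * a * t)⁻¹ ∈ A := A.inv_mem ha
    simpa [mul_assoc] using this

theorem mem_conjSub {t x : G} {A : Subgroup G} : x ∈ conjSub t A ↔ t⁻¹ * x * t ∈ A :=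
  Iff.rfl

theorem conj_mem_conjSub {t a : G} {A : Subgroup G} (ha : a ∈ A) :
    t * a * t⁻¹ ∈ conjSub t A := by
  rw [mem_conjSub]
  have : t⁻¹ * (t * a * t⁻¹) * t = a := by group
  rwa [this]

theorem conjSub_conjSub_inv (t : G) (A : Subgroup G) : conjSub t (conjSub t⁻¹ A) = A := by
  ext x
  rw [mem_conjSub, mem_conjSub]
  have : t * (t⁻¹ * x * t) * t⁻¹ = x := by group
  rw [inv_inv, this]

theorem conjSub_mono {t : G} {A B : Subgroup G} (h : A ≤ B) : conjSub t A ≤ conjSub t B :=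
  fun _ hx => h hx

theorem conjSub_bot (t : G) : conjSub t (⊥ : Subgroup G) = ⊥ := by
  ext x
  rw [mem_conjSub, Subgroup.mem_bot, Subgroup.mem_bot,
    show t⁻¹ * x * t = t⁻¹ * x * t⁻¹⁻¹ by rw [inv_inv], conj_eq_one_iff]

theorem conjSub_ne_bot {t : G} {A : Subgroup G} (h : A ≠ ⊥) : conjSub t A ≠ ⊥ := by
  obtain ⟨⟨a, ha⟩, hne⟩ := Subgroup.ne_bot_iff_exists_ne_one.mp h
  rw [Subgroup.ne_bot_iff_exists_ne_one]
  refine ⟨⟨t * a * t⁻¹, conj_mem_conjSub ha⟩, fun heq => hne ?_⟩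
  have h1 : t * a * t⁻¹ = 1 := congrArg Subtype.val heq
  rw [conj_eq_one_iff] at h1
  exact Subtype.ext h1

theorem conjSub_eq_self {t : G} {A T : Subgroup G} (hA : NormalIn A T) (ht : t ∈ T) :
    conjSub t A = A := by
  ext x
  rw [mem_conjSub]
  constructor
  · intro hx
    have := hA.2 t ht _ hx
    have e : t * (t⁻¹ * x * t) * t⁻¹ = x := by group
    rwa [e] at this
  · intro hx
    simpa using hA.2 t⁻¹ (T.inv_mem ht) x hx

theorem conjSub_eq_self_of_mem_normalizer {t : G} {A : Subgroup G}
    (ht : t ∈ Subgroup.normalizer (A : Set G)) : conjSub t A = A := by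
  ext x
  rw [mem_conjSub]
  have := Subgroup.mem_normalizer_iff.mp ((Subgroup.normalizer (A : Set G)).inv_mem ht) x
  simpa [mul_assoc] using this.symm

theorem NormalIn.conjSub_self {A B T : Subgroup G} (h : NormalIn A B) (hB : NormalIn B T)
    {t : G} (ht : t ∈ T) : NormalIn (conjSub t A) B := by
  have hBt : conjSub t B = B := conjSub_eq_self hB ht
  constructor
  · rw [← hBt]; exact conjSub_mono h.1
  · intro b hb a ha
    rw [mem_conjSub] at ha ⊢
    have hb' : t⁻¹ * b * t ∈ B := by rw [← hBt] at hb; exact hb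
    have := h.2 _ hb' _ ha
    have e : t⁻¹ * (b * a * b⁻¹) * t =
        (t⁻¹ * b * t) * (t⁻¹ * a * t) * (t⁻¹ * b * t)⁻¹ := by group
    rwa [e]

/-! ### Minimal normal subgroups -/

def MinNormalIn (M T : Subgroup G) : Prop :=
  NormalIn M T ∧ M ≠ ⊥ ∧ ∀ N, NormalIn N T → N ≤ M → N = ⊥ ∨ N = M

theorem MinNormalIn.conjSub {M P T : Subgroup G} (hM : MinNormalIn M P)
    (hP : NormalIn P T) {t : G} (ht : t ∈ T) : MinNormalIn (conjSub t M) P := by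
  refine ⟨hM.1.conjSub_self hP ht, conjSub_ne_bot hM.2.1, fun N hN hNle => ?_⟩
  have hle : WielandtAux.conjSub t⁻¹ N ≤ M := by
    intro x hx
    have hx' : x ∈ WielandtAux.conjSub t⁻¹ N := hx
    rw [mem_conjSub, inv_inv] at hx'
    have h2 := hNle hx'
    rw [mem_conjSub] at h2
    have e : t⁻¹ * (t * x * t⁻¹) * t = x := by group
    rwa [e] at h2
  rcases hM.2.2 (WielandtAux.conjSub t⁻¹ N) (hN.conjSub_self hP (T.inv_mem ht)) hle with hc | hc
  · left
    have := congrArg (WielandtAux.conjSub t) hc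
    rwa [conjSub_conjSub_inv, conjSub_bot] at this
  · right
    have := congrArg (WielandtAux.conjSub t) hc
    rwa [conjSub_conjSub_inv] at this

theorem exists_minNormalIn [Finite G] {T : Subgroup G} (N : Subgroup G)
    (hN : NormalIn N T) (hbot : N ≠ ⊥) : ∃ M, M ≤ N ∧ MinNormalIn M T := by
  obtain ⟨M, ⟨hMbot, hMN, hMT⟩, hmin⟩ :=
    (Finite.to_wellFoundedLT (α := Subgroup G)).wf.has_min
      {A | A ≠ ⊥ ∧ A ≤ N ∧ NormalIn A T} ⟨N, hbot, le_rfl, hN⟩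
  refine ⟨M, hMN, hMT, hMbot, fun A hA hAM => ?_⟩
  by_contra hcon
  push_neg at hcon
  exact hmin A ⟨hcon.1, hAM.trans hMN, hA⟩ (lt_of_le_of_ne hAM hcon.2)


theorem card_lt_of_lt [Finite G] {P T : Subgroup G} (h : P < T) :
    Nat.card P < Nat.card T := by
  rw [show Nat.card P = (P : Set G).ncard from Nat.card_coe_set_eq _,
      show Nat.card T = (T : Set G).ncard from Nat.card_coe_set_eq _]
  exact Set.ncard_lt_ncard (SetLike.coe_ssubset_coe.mpr h) (Set.toFinite _)
/-! ### A minimal normal subgroup normalizes every subnormal subgroup -/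

theorem minNormal_le_normalizer [Finite G] :
    ∀ (n : ℕ) (T M H : Subgroup G), Nat.card T ≤ n → MinNormalIn M T →
      SubnormalIn H T → M ≤ Subgroup.normalizer (H : Set G) := by
  intro n
  induction n with
  | zero =>
    intro T M H hcard _ _
    have : 0 < Nat.card T := Nat.card_pos
    omega
  | succ n ih =>
    intro T M H hcard hM hH
    rcases hH.eq_or_exists with rfl | ⟨P, hPT, hPn, hHP⟩
    · exact hM.1.1.trans Subgroup.le_normalizer
    have hPleT : P ≤ T := hPn.1
    have hcardP : Nat.card P ≤ n := by
      have hlt : Nat.card P < Nat.card T := card_lt_of_lt (lt_of_le_of_ne hPleT hPT)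
      omega
    by_cases hMP : M ≤ P
    · have hMnP : NormalIn M P := ⟨hMP, fun p hp => hM.1.2 p (hPleT hp)⟩
      set ι := {A : Subgroup G // MinNormalIn A P ∧ A ≤ M} with hι
      set S : Subgroup G := ⨆ A : ι, (A : Subgroup G) with hS
      have hSM : S ≤ M := iSup_le fun A => A.2.2
      have hgen : ∀ (A : ι) (t : G), t ∈ T → ∀ x ∈ (A : Subgroup G), t * x * t⁻¹ ∈ S := by
        intro A t ht x hx
        have hmem : MinNormalIn (WielandtAux.conjSub t A.1) P ∧
            WielandtAux.conjSub t A.1 ≤ M := by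
          refine ⟨A.2.1.conjSub hPn ht, fun y hy => ?_⟩
          rw [mem_conjSub] at hy
          have h1 : t⁻¹ * y * t ∈ M := A.2.2 hy
          have h2 := hM.1.2 t ht _ h1
          have e : t * (t⁻¹ * y * t) * t⁻¹ = y := by group
          rwa [e] at h2
        have hle : WielandtAux.conjSub t A.1 ≤ S :=
          le_iSup (fun A : ι => (A : Subgroup G)) ⟨WielandtAux.conjSub t A.1, hmem⟩
        exact hle (conj_mem_conjSub hx)
      have hSnT : NormalIn S T := by
        refine ⟨hSM.trans hM.1.1, fun t ht s hs => ?_⟩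
        refine Subgroup.iSup_induction (C := fun x => t * x * t⁻¹ ∈ S) _ hs
          (fun A x hx => hgen A t ht x hx) (by simpa using S.one_mem) ?_
        intro x y hx hy
        have hmul := S.mul_mem hx hy
        have e : (t * x * t⁻¹) * (t * y * t⁻¹) = t * (x * y) * t⁻¹ := by group
        rwa [e] at hmul
      have hSbot : S ≠ ⊥ := by
        obtain ⟨M₀, hM₀M, hM₀⟩ := exists_minNormalIn M hMnP hM.2.1
        have hM₀S : M₀ ≤ S := le_iSup (fun A : ι => (A : Subgroup G)) ⟨M₀, hM₀, hM₀M⟩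
        intro h
        exact hM₀.2.1 (le_bot_iff.mp (h ▸ hM₀S))
      have hSM' : S = M := (hM.2.2 S hSnT hSM).resolve_left hSbot
      rw [← hSM']
      exact iSup_le fun A => ih P A.1 H hcardP A.2.1 hHP
    · have hbot : M ⊓ P = ⊥ := by
        rcases hM.2.2 (M ⊓ P)
            ⟨inf_le_left.trans hM.1.1,
             fun t ht x hx => ⟨hM.1.2 t ht x hx.1, hPn.2 t ht x hx.2⟩⟩
            inf_le_left with h | h
        · exact h
        · exact absurd (h ▸ inf_le_right : M ≤ P) hMP
      intro m hm
      have hcomm : ∀ p ∈ P, m * p * m⁻¹ = p := by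
        intro p hp
        have h1 : m * p * m⁻¹ ∈ P := hPn.2 m (hM.1.1 hm) p hp
        have h2 : m * p * m⁻¹ * p⁻¹ ∈ P := P.mul_mem h1 (P.inv_mem hp)
        have h3 : p * m⁻¹ * p⁻¹ ∈ M := hM.1.2 p (hPleT hp) m⁻¹ (M.inv_mem hm)
        have h4 : m * (p * m⁻¹ * p⁻¹) ∈ M := M.mul_mem hm h3
        have e : m * (p * m⁻¹ * p⁻¹) = m * p * m⁻¹ * p⁻¹ := by group
        rw [e] at h4
        have h5 : m * p * m⁻¹ * p⁻¹ ∈ M ⊓ P := ⟨h4, h2⟩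
        rw [hbot, Subgroup.mem_bot] at h5
        exact mul_inv_eq_one.mp h5
      rw [Subgroup.mem_normalizer_iff]
      intro x
      constructor
      · intro hx
        rw [hcomm x (hHP.le hx)]
        exact hx
      · intro hx
        have hyP : m * x * m⁻¹ ∈ P := hHP.le hx
        have e1 : m * (m * x * m⁻¹) * m⁻¹ = m * x * m⁻¹ := hcomm _ hyP
        have e2 : x = m * x * m⁻¹ := by
          have := congrArg (fun z => m⁻¹ * z * m) e1
          have e3 : m⁻¹ * (m * (m * x * m⁻¹) * m⁻¹) * m = m * x * m⁻¹ := by group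
          have e4 : m⁻¹ * (m * x * m⁻¹) * m = x := by group
          rw [e3, e4] at this
          exact this.symm
        rw [e2]
        exact hx


theorem conjSub_eq_map {t : G} {A : Subgroup G} :
    WielandtAux.conjSub t A = A.map (MulAut.conj t).toMonoidHom := by
  ext x
  rw [mem_conjSub, Subgroup.mem_map]
  constructor
  · intro h
    refine ⟨t⁻¹ * x * t, h, ?_⟩
    show t * (t⁻¹ * x * t) * t⁻¹ = x
    group
  · rintro ⟨a, ha, rfl⟩
    show t⁻¹ * (t * a * t⁻¹) * t ∈ A
    have e : t⁻¹ * (t * a * t⁻¹) * t = a := by group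
    rwa [e]

theorem conjSub_sup {t : G} {H K : Subgroup G} :
    WielandtAux.conjSub t (H ⊔ K) = WielandtAux.conjSub t H ⊔ WielandtAux.conjSub t K := by
  rw [conjSub_eq_map, conjSub_eq_map, conjSub_eq_map, Subgroup.map_sup]

theorem le_normalizer_sup {M H K : Subgroup G} (h1 : M ≤ Subgroup.normalizer (H : Set G))
    (h2 : M ≤ Subgroup.normalizer (K : Set G)) : M ≤ Subgroup.normalizer ((H ⊔ K : Subgroup G) : Set G) := by
  intro m hm
  have e : WielandtAux.conjSub m (H ⊔ K) = H ⊔ K := by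
    rw [conjSub_sup, conjSub_eq_self_of_mem_normalizer (h1 hm),
      conjSub_eq_self_of_mem_normalizer (h2 hm)]
  rw [Subgroup.mem_normalizer_iff]
  intro x
  constructor
  · intro hx
    rw [← e]
    exact conj_mem_conjSub hx
  · intro hx
    rw [← e, mem_conjSub] at hx
    have e2 : m⁻¹ * (m * x * m⁻¹) * m = x := by group
    rwa [e2] at hx

universe u

theorem main : ∀ (n : ℕ) (G : Type u) [Group G] [Finite G], Nat.card G ≤ n →
    ∀ H K : Subgroup G, SubnormalIn H ⊤ → SubnormalIn K ⊤ →
      SubnormalIn (H ⊔ K) ⊤ := by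
  intro n
  induction n with
  | zero =>
    intro G _ _ hcard
    have : 0 < Nat.card G := Nat.card_pos
    omega
  | succ n ih =>
    intro G _ _ hcard H K hH hK
    by_cases hJ : H ⊔ K = ⊤
    · rw [hJ]; exact SubnormalIn.refl ⊤
    have htop : (⊤ : Subgroup G) ≠ ⊥ := by
      intro h
      exact hJ (le_antisymm le_top (h ▸ bot_le))
    obtain ⟨M, -, hM⟩ := exists_minNormalIn (T := ⊤) ⊤ (NormalIn.refl ⊤) htop
    have hcT : Nat.card (⊤ : Subgroup G) ≤ n + 1 := by
      rw [Subgroup.card_top]; exact hcard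
    have hMH : M ≤ Subgroup.normalizer (H : Set G) := minNormal_le_normalizer (n + 1) ⊤ M H hcT hM hH
    have hMK : M ≤ Subgroup.normalizer (K : Set G) := minNormal_le_normalizer (n + 1) ⊤ M K hcT hM hK
    have hMJ : M ≤ Subgroup.normalizer ((H ⊔ K : Subgroup G) : Set G) := le_normalizer_sup hMH hMK
    haveI : M.Normal := ⟨fun x hx g => hM.1.2 g trivial x hx⟩
    have hsurj : Function.Surjective (QuotientGroup.mk' M) := QuotientGroup.mk'_surjective M
    have hQcard : Nat.card (G ⧸ M) ≤ n := by
      have h1 : Nat.card G = Nat.card (G ⧸ M) * Nat.card M :=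
        Subgroup.card_eq_card_quotient_mul_card_subgroup M
      have h2 : 1 < Nat.card M := (Subgroup.one_lt_card_iff_ne_bot M).mpr hM.2.1
      have h3 : 0 < Nat.card (G ⧸ M) := Nat.card_pos
      have h4 : Nat.card (G ⧸ M) * 2 ≤ Nat.card (G ⧸ M) * Nat.card M :=
        Nat.mul_le_mul_left _ h2
      omega
    have hHq : SubnormalIn (H.map (QuotientGroup.mk' M)) ⊤ := by
      have := hH.map (QuotientGroup.mk' M)
      rwa [Subgroup.map_top_of_surjective _ hsurj] at this
    have hKq : SubnormalIn (K.map (QuotientGroup.mk' M)) ⊤ := by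
      have := hK.map (QuotientGroup.mk' M)
      rwa [Subgroup.map_top_of_surjective _ hsurj] at this
    have h5 := ih (G ⧸ M) hQcard _ _ hHq hKq
    rw [← Subgroup.map_sup] at h5
    have h7 := h5.comap (QuotientGroup.mk' M)
    rw [Subgroup.comap_top, Subgroup.comap_map_eq, QuotientGroup.ker_mk'] at h7
    exact ((normalIn_of_le_normalizer le_sup_left
      (sup_le Subgroup.le_normalizer hMJ)).subnormalIn).trans h7


end WielandtAux

/-- Wielandt's theorem (1939): the join of two subnormal subgroups of a finite
group is subnormal. -/
theorem wielandt_join_subnormal (G : Type*) [Group G] [Finite G]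
    (H K : Subgroup G) (hH : H.IsSubnormalChain) (hK : K.IsSubnormalChain) :
    (H ⊔ K).IsSubnormalChain :=
  WielandtAux.isSubnormal_of_subnormalIn
    (WielandtAux.main (Nat.card G) G le_rfl H K
      (WielandtAux.subnormalIn_of_isSubnormal hH)
      (WielandtAux.subnormalIn_of_isSubnormal hK))
end

section
/- Let G be a finite group all of whose Sylow subgroups are cyclic. Then normality is transitive in G: whenever K is a normal subgroup of H and H is a normal subgroup of G, the subgroup K is normal in G. -/
open Subgroup Pointwise
open scoped commutatorElement

section Helpers

variable {G : Type*} [Group G]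

/-- In a finite cyclic group, any element killed by `orderOf x` lies in `zpowers x`. -/
lemma mem_zpowers_of_pow_orderOf_eq_one [Finite G] (hC : IsCyclic G) (x y : G)
    (hy : y ^ orderOf x = 1) : y ∈ Subgroup.zpowers x := by
  obtain ⟨g, hg⟩ := hC.exists_generator
  obtain ⟨a, ha⟩ := (Submonoid.mem_powers_iff y g).mp (mem_powers_iff_mem_zpowers.mpr (hg y))
  obtain ⟨b, hb⟩ := (Submonoid.mem_powers_iff x g).mp (mem_powers_iff_mem_zpowers.mpr (hg x))
  have hb' : x = g ^ b := hb.symm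
  have ha' : y = g ^ a := ha.symm
  set m := orderOf g with hm
  have hmpos : 0 < m := orderOf_pos g
  set d := Nat.gcd m b with hd
  have hdpos : 0 < d := Nat.gcd_pos_of_pos_left b hmpos
  have hox : orderOf x = m / d := by
    rw [hb', orderOf_pow, hm]
  -- from y ^ orderOf x = 1 : m ∣ a * (m / d), deduce d ∣ a
  have h1 : g ^ (a * (m / d)) = 1 := by
    rw [pow_mul, ← ha', ← hox, hy]
  have h2 : m ∣ a * (m / d) := orderOf_dvd_of_pow_eq_one h1
  have hda : d ∣ a := by
    have hdm : d ∣ m := Nat.gcd_dvd_left m b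
    have hmd : m = d * (m / d) := (Nat.div_mul_cancel hdm).symm.trans (mul_comm _ _)
    have hpos : 0 < m / d := Nat.div_pos (Nat.le_of_dvd hmpos hdm) hdpos
    have : d * (m / d) ∣ a * (m / d) := by rw [← hmd]; exact h2
    exact (Nat.mul_dvd_mul_iff_right hpos).mp this
  -- g ^ d ∈ zpowers x via Bezout
  have hgd : g ^ (d : ℤ) ∈ Subgroup.zpowers x := by
    have hbez : (d : ℤ) = m * Nat.gcdA m b + b * Nat.gcdB m b := Nat.gcd_eq_gcd_ab m b
    rw [hbez, zpow_add, zpow_mul, zpow_mul]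
    have h3 : (g : G) ^ (m : ℤ) = 1 := by
      rw [zpow_natCast, pow_orderOf_eq_one]
    have h4 : g ^ (b : ℤ) = x := by rw [zpow_natCast, hb]
    rw [h3, one_zpow, one_mul, h4]
    exact zpow_mem (mem_zpowers x) _
  obtain ⟨e, he⟩ := hda
  have : y = (g ^ (d : ℤ)) ^ (e : ℤ) := by
    rw [← zpow_mul, ← Nat.cast_mul, ← he, zpow_natCast, ← ha']
  rw [this]
  exact zpow_mem hgd _

lemma normal_of_subgroupOf_normal {H K : Subgroup G} (hKH : K ≤ H)
    (h : (K.subgroupOf H).Normal) : ∀ k ∈ K, ∀ g ∈ H, g * k * g⁻¹ ∈ K := by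
  intro k hk g hg
  have := h.conj_mem ⟨k, hKH hk⟩ (by simpa [Subgroup.mem_subgroupOf] using hk) ⟨g, hg⟩
  simpa [Subgroup.mem_subgroupOf] using this

end Helpers

section Burnside

variable {G : Type*} [Group G] [Finite G]

/-- Burnside precondition for a cyclic Sylow subgroup at the smallest prime. -/
lemma normalizer_le_centralizer_minFac {p : ℕ} [Fact p.Prime] (P : Sylow p G)
    (hcyc : IsCyclic P) (hmin : p = (Nat.card G).minFac) (hG : 1 < Nat.card G) :
    normalizer ((P : Subgroup G) : Set G) ≤ centralizer (P : Set G) := by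
  have hp : p.Prime := Fact.out
  set f := (P : Subgroup G).normalizerMonoidHom
  -- P is abelian, so P (inside the normalizer) is contained in the kernel
  have hPC : (P : Subgroup G) ≤ centralizer (P : Set G) := by
    obtain ⟨g, hg⟩ := hcyc.exists_generator
    intro x hx
    rw [Subgroup.mem_centralizer_iff]
    rintro y hy
    obtain ⟨a, ha⟩ := (Submonoid.mem_powers_iff (⟨x, hx⟩ : ↥(P : Subgroup G)) g).mp
      (mem_powers_iff_mem_zpowers.mpr (hg _))
    obtain ⟨b, hb⟩ := (Submonoid.mem_powers_iff (⟨y, hy⟩ : ↥(P : Subgroup G)) g).mp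
      (mem_powers_iff_mem_zpowers.mpr (hg _))
    have hcomm : (g ^ b) * (g ^ a) = (g ^ a) * (g ^ b) := by
      rw [← pow_add, ← pow_add, add_comm]
    rw [ha, hb] at hcomm
    exact congrArg Subtype.val hcomm
  have hker : (P : Subgroup G).subgroupOf (normalizer ((P : Subgroup G) : Set G)) ≤ f.ker := by
    rw [Subgroup.normalizerMonoidHom_ker]
    intro x hx
    rw [Subgroup.mem_subgroupOf] at hx ⊢
    exact hPC hx
  -- index of the kernel divides both P.index and totient (card P)
  have hd1 : f.ker.index ∣ (P : Subgroup G).index := by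
    refine (Subgroup.index_dvd_of_le hker).trans ?_
    have := Subgroup.relIndex_mul_index (P.le_normalizer)
    exact Dvd.intro _ this
  have hd2 : f.ker.index ∣ Nat.card (MulAut ↥(P : Subgroup G)) := by
    have h1 : Nat.card (normalizer ((P : Subgroup G) : Set G) ⧸ f.ker) = Nat.card f.range :=
      Nat.card_congr (QuotientGroup.quotientKerEquivRange f).toEquiv
    have h2 : f.ker.index = Nat.card f.range := h1
    rw [h2]
    exact Subgroup.card_subgroup_dvd_card _
  have hcard : Nat.card ↥(P : Subgroup G) = p ^ (Nat.card G).factorization p :=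
    P.card_eq_multiplicity
  have hpdvd : p ∣ Nat.card G := hmin ▸ Nat.minFac_dvd _
  have hn1 : 1 ≤ (Nat.card G).factorization p := by
    rw [← Nat.Prime.pow_dvd_iff_le_factorization hp (by positivity)]
    simpa using hpdvd
  rw [IsCyclic.card_mulAut, hcard, Nat.totient_prime_pow hp hn1] at hd2
  -- show the index is 1
  have hone : f.ker.index = 1 := by
    by_contra hne
    have hind0 : (P : Subgroup G).index ≠ 0 := Subgroup.index_ne_zero_of_finite
    have hd0 : f.ker.index ≠ 0 := fun h => hind0 (by simpa [h] using hd1)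
    obtain ⟨r, hrp, hrd⟩ : ∃ r, r.Prime ∧ r ∣ f.ker.index :=
      ⟨_, Nat.minFac_prime hne, Nat.minFac_dvd _⟩
    have hrG : r ∣ Nat.card G := (hrd.trans hd1).trans (Subgroup.index_dvd_card _)
    have hrge : p ≤ r := hmin ▸ Nat.minFac_le_of_dvd hrp.two_le hrG
    have hrtot : r ∣ p ^ ((Nat.card G).factorization p - 1) * (p - 1) := hrd.trans hd2
    rcases (Nat.Prime.dvd_mul hrp).mp hrtot with h | h
    · have : r = p := (Nat.prime_dvd_prime_iff_eq hrp hp).mp (hrp.dvd_of_dvd_pow h)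
      have hpk : p ∣ f.ker.index := this ▸ hrd
      exact P.not_dvd_index (hpk.trans hd1)
    · have h2 := hp.two_le
      have hple : r ≤ p - 1 := Nat.le_of_dvd (by omega) h
      omega
  have : f.ker = ⊤ := Subgroup.index_eq_one.mp hone
  rw [Subgroup.normalizerMonoidHom_ker] at this
  intro x hx
  have := this ▸ Subgroup.mem_top (⟨x, hx⟩ : ↥(normalizer ((P : Subgroup G) : Set G)))
  rwa [Subgroup.mem_subgroupOf] at this

end Burnside

section Structure

universe u

/-- Key structure lemma: a nontrivial finite Z-group has, for some prime `q`, a normal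
(indeed characteristic-by-orders) cyclic Sylow `q`-subgroup, described as the set of
elements of `q`-power order. -/
lemma zgroup_exists_normal_sylow (n : ℕ) :
    ∀ (G : Type u) [Group G] [Finite G] [IsZGroup G], Nat.card G = n → 1 < Nat.card G →
    ∃ q : ℕ, q.Prime ∧ q ∣ Nat.card G ∧ ∃ Q : Subgroup G, IsCyclic Q ∧
      (∀ x : G, x ∈ Q ↔ ∃ k, x ^ q ^ k = 1) ∧ ¬ q ∣ Q.index := by
  induction n using Nat.strong_induction_on with
  | _ n ih =>
  intro G _ _ _ hn hG
  have hcard1 : Nat.card G ≠ 1 := by omega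
  set p := (Nat.card G).minFac with hp_def
  have hp : p.Prime := Nat.minFac_prime hcard1
  have : Fact p.Prime := ⟨hp⟩
  obtain ⟨P⟩ : Nonempty (Sylow p G) := inferInstance
  have hcycP : IsCyclic ↥(P : Subgroup G) := IsZGroup.isZGroup p hp P
  have hNC := normalizer_le_centralizer_minFac P hcycP hp_def hG
  set N := (MonoidHom.transferSylow P hNC).ker with hN
  have hcompl : Subgroup.IsComplement' N (P : Subgroup G) :=
    MonoidHom.ker_transferSylow_isComplement' P hNC
  have hcardmul : Nat.card N * Nat.card ↥(P : Subgroup G) = Nat.card G := hcompl.card_mul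
  have hindexN : N.index = Nat.card ↥(P : Subgroup G) := hcompl.symm.index_eq_card
  have hcardP : Nat.card ↥(P : Subgroup G) = p ^ (Nat.card G).factorization p :=
    P.card_eq_multiplicity
  have hpdvd : p ∣ Nat.card G := Nat.minFac_dvd _
  have hn1 : 1 ≤ (Nat.card G).factorization p := by
    rw [← Nat.Prime.pow_dvd_iff_le_factorization hp (by positivity)]
    simpa using hpdvd
  have hPnontriv : 1 < Nat.card ↥(P : Subgroup G) := by
    rw [hcardP]
    exact Nat.one_lt_pow (by omega) hp.one_lt
  by_cases hNtriv : Nat.card N = 1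
  · -- G is a p-group; take Q = ⊤
    have hPG : Nat.card ↥(P : Subgroup G) = Nat.card G := by
      rw [← hcardmul, hNtriv, one_mul]
    refine ⟨p, hp, hpdvd, ⊤, ?_, ?_, ?_⟩
    · have hPt : (P : Subgroup G) = ⊤ := Subgroup.eq_top_of_card_eq _ hPG
      rw [← hPt]
      exact hcycP
    · intro x
      simp only [Subgroup.mem_top, true_iff]
      refine ⟨(Nat.card G).factorization p, ?_⟩
      have he : p ^ (Nat.card G).factorization p = Nat.card G := by
        rw [← hcardP, hPG]
      rw [he]
      exact pow_card_eq_one'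
    · rw [Subgroup.index_top]
      intro h
      exact hp.one_lt.ne' (Nat.dvd_one.mp h)
  · -- inductive step: use the normal p-complement N
    have hposN : 0 < Nat.card ↥N := Nat.card_pos
    have hNlt : Nat.card ↥N < n := by
      rw [← hn, ← hcardmul]
      exact (Nat.lt_mul_iff_one_lt_right hposN).mpr hPnontriv
    have hN1 : 1 < Nat.card ↥N := by omega
    obtain ⟨q, hq, hqN, Q_N, hQcyc, hQmem, hQind⟩ := ih (Nat.card ↥N) hNlt ↥N rfl hN1
    have hqG : q ∣ Nat.card G := hqN.trans (Subgroup.card_subgroup_dvd_card _)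
    have hqp : q ≠ p := by
      intro h
      subst h
      exact MonoidHom.not_dvd_card_ker_transferSylow P hNC hqN
    refine ⟨q, hq, hqG, Q_N.map N.subtype, ?_, ?_, ?_⟩
    · exact isCyclic_of_surjective _
        (Subgroup.equivMapOfInjective Q_N N.subtype N.subtype_injective).surjective
    · intro x
      constructor
      · rintro ⟨y, hy, rfl⟩
        obtain ⟨k, hk⟩ := (hQmem y).mp hy
        exact ⟨k, by exact_mod_cast congrArg (Subgroup.subtype N) hk⟩
      · rintro ⟨k, hk⟩
        have hxN : x ∈ N := by
          have hord : orderOf ((QuotientGroup.mk' N) x) ∣ q ^ k := by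
            apply orderOf_dvd_of_pow_eq_one
            rw [← map_pow, hk, map_one]
          obtain ⟨j, hjk, hoj⟩ := (Nat.dvd_prime_pow hq).mp hord
          rcases Nat.eq_zero_or_pos j with h0 | hjpos
          · rw [h0, pow_zero] at hoj
            have : (QuotientGroup.mk' N) x = 1 := orderOf_eq_one_iff.mp hoj
            exact (QuotientGroup.eq_one_iff x).mp this
          · exfalso
            have hcardq : orderOf ((QuotientGroup.mk' N) x) ∣ N.index := by
              rw [Subgroup.index_eq_card]
              exact orderOf_dvd_natCard _
            rw [hoj, hindexN, hcardP] at hcardq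
            have hqdvd : q ∣ p ^ (Nat.card G).factorization p :=
              (dvd_pow_self q hjpos.ne').trans hcardq
            exact hqp ((Nat.prime_dvd_prime_iff_eq hq hp).mp (hq.dvd_of_dvd_pow hqdvd))
        refine ⟨⟨x, hxN⟩, (hQmem ⟨x, hxN⟩).mpr ⟨k, ?_⟩, rfl⟩
        ext
        push_cast
        exact hk
    · have hle : Q_N.map N.subtype ≤ N := Subgroup.map_subtype_le _
      have hrel : (Q_N.map N.subtype).subgroupOf N = Q_N :=
        Subgroup.comap_map_eq_self_of_injective N.subtype_injective _
      have hmul := Subgroup.relIndex_mul_index hle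
      rw [Subgroup.relIndex, hrel, hindexN, hcardP] at hmul
      intro hdvd
      rw [← hmul] at hdvd
      rcases (Nat.Prime.dvd_mul hq).mp hdvd with h | h
      · exact hQind h
      · exact hqp ((Nat.prime_dvd_prime_iff_eq hq hp).mp (hq.dvd_of_dvd_pow h))

end Structure


section Main

universe u

lemma subgroupOf_map_normal {G G' : Type*} [Group G] [Group G'] (f : G →* G')
    {H K : Subgroup G} (hc : ∀ k ∈ K, ∀ g ∈ H, g * k * g⁻¹ ∈ K) :
    ((K.map f).subgroupOf (H.map f)).Normal := by
  constructor
  intro n hn g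
  rw [Subgroup.mem_subgroupOf] at hn ⊢
  obtain ⟨k, hk, hk'⟩ := hn
  obtain ⟨h, hh, hh'⟩ := g.2
  refine ⟨h * k * h⁻¹, hc k hk h hh, ?_⟩
  push_cast
  rw [map_mul, map_mul, map_inv, hk', hh']

lemma best_taussky_aux (n : ℕ) :
    ∀ (G : Type u) [Group G] [Finite G] [IsZGroup G], Nat.card G = n →
    ∀ H K : Subgroup G, H.Normal → K ≤ H → (K.subgroupOf H).Normal → K.Normal := by
  induction n using Nat.strong_induction_on with
  | _ n ih =>
  intro G _ _ _ hn H K hH hKH hKnH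
  have hconj : ∀ k ∈ K, ∀ g ∈ H, g * k * g⁻¹ ∈ K := normal_of_subgroupOf_normal hKH hKnH
  by_cases hG1 : Nat.card G ≤ 1
  · have hcard1 : Nat.card G = 1 := le_antisymm hG1 Nat.card_pos
    have : Subsingleton G := (Nat.card_eq_one_iff_unique.mp hcard1).1
    exact ⟨fun x hx g => by
      have hgx : g * x * g⁻¹ = x := Subsingleton.elim _ _
      rwa [hgx]⟩
  · push_neg at hG1
    obtain ⟨q, hq, hqG, Q, hQcyc, hQmem, hQind⟩ :=
      zgroup_exists_normal_sylow (Nat.card G) G rfl hG1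
    have : Fact q.Prime := ⟨hq⟩
    have hQnormal : Q.Normal := by
      constructor
      intro x hx g
      obtain ⟨k, hk⟩ := (hQmem x).mp hx
      refine (hQmem _).mpr ⟨k, ?_⟩
      have hcg : (g * x * g⁻¹) ^ q ^ k = g * x ^ q ^ k * g⁻¹ := by
        rw [← MulAut.conj_apply, ← map_pow, MulAut.conj_apply]
      rw [hcg, hk, mul_one, mul_inv_cancel]
    by_cases hKQ : ∃ x, x ∈ K ⊓ Q ∧ x ≠ 1
    · -- Case 1: K meets Q nontrivially; quotient by a cyclic piece inside K
      obtain ⟨x, hx, hx1⟩ := hKQ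
      obtain ⟨hxK, hxQ⟩ := Subgroup.mem_inf.mp hx
      set Z := Subgroup.zpowers x with hZdef
      have hZK : Z ≤ K := Subgroup.zpowers_le.mpr hxK
      have hZQ : Z ≤ Q := Subgroup.zpowers_le.mpr hxQ
      have hZnormal : Z.Normal := by
        constructor
        intro m hm g
        have hmQ : m ∈ Q := hZQ hm
        have hm'Q : g * m * g⁻¹ ∈ Q := hQnormal.conj_mem m hmQ g
        have hmord : m ^ orderOf x = 1 :=
          orderOf_dvd_iff_pow_eq_one.mp (orderOf_dvd_of_mem_zpowers hm)
        have hm'ord : (g * m * g⁻¹) ^ orderOf x = 1 := by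
          have hcg : (g * m * g⁻¹) ^ orderOf x = g * m ^ orderOf x * g⁻¹ := by
            rw [← MulAut.conj_apply, ← map_pow, MulAut.conj_apply]
          rw [hcg, hmord, mul_one, mul_inv_cancel]
        have hordeq : orderOf (⟨x, hxQ⟩ : ↥Q) = orderOf x :=
          (orderOf_injective Q.subtype Q.subtype_injective ⟨x, hxQ⟩).symm
        have hmem := mem_zpowers_of_pow_orderOf_eq_one hQcyc (⟨x, hxQ⟩ : ↥Q)
          ⟨g * m * g⁻¹, hm'Q⟩ (by
            ext
            push_cast
            rw [hordeq, hm'ord])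
        obtain ⟨i, hi⟩ := hmem
        refine ⟨i, ?_⟩
        have := congrArg (Subgroup.subtype Q) hi
        push_cast at this
        exact this
      have hZne : Z ≠ ⊥ := by
        intro hbot
        apply hx1
        have hxZ : x ∈ Z := Subgroup.mem_zpowers x
        rw [hbot, Subgroup.mem_bot] at hxZ
        exact hxZ
      -- pass to the quotient G ⧸ Z
      have hZ1 : 1 < Nat.card ↥Z := (Subgroup.one_lt_card_iff_ne_bot Z).mpr hZne
      have hind0 : Z.index ≠ 0 := Subgroup.index_ne_zero_of_finite
      have hcardlt : Nat.card (G ⧸ Z) < n := by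
        rw [← Subgroup.index_eq_card, ← hn, ← Subgroup.index_mul_card (H := Z)]
        exact (Nat.lt_mul_iff_one_lt_right (Nat.pos_of_ne_zero hind0)).mpr hZ1
      set π := QuotientGroup.mk' Z with hπ
      have hsurj : Function.Surjective π := QuotientGroup.mk'_surjective Z
      have hKmapn : (K.map π).Normal :=
        ih _ hcardlt (G ⧸ Z) rfl (H.map π) (K.map π) (hH.map π hsurj)
          (Subgroup.map_mono hKH) (subgroupOf_map_normal π hconj)
      have hcomap : (K.map π).comap π = K := by
        rw [Subgroup.comap_map_eq, QuotientGroup.ker_mk']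
        exact sup_eq_left.mpr hZK
      rw [← hcomap]
      exact hKmapn.comap π
    · -- Case 2: K ∩ Q = 1
      push_neg at hKQ
      have hKQbot : ∀ y, y ∈ K → y ∈ Q → y = 1 := fun y h1 h2 =>
        hKQ y (Subgroup.mem_inf.mpr ⟨h1, h2⟩)
      have hqK : ¬ q ∣ Nat.card ↥K := by
        intro hdvd
        obtain ⟨y, hy⟩ := exists_prime_orderOf_dvd_card' (G := ↥K) q hdvd
        have hyG : orderOf ((y : G)) = q := by
          rw [← hy]
          exact orderOf_injective K.subtype K.subtype_injective y
        have hyQ : (y : G) ∈ Q := (hQmem _).mpr ⟨1, by rw [pow_one, ← hyG, pow_orderOf_eq_one]⟩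
        have hy1 : (y : G) = 1 := hKQbot _ y.2 hyQ
        rw [hy1, orderOf_one] at hyG
        exact hq.one_lt.ne' hyG.symm
      have hQne : Q ≠ ⊥ := by
        obtain ⟨y, hy⟩ := exists_prime_orderOf_dvd_card' (G := G) q hqG
        intro hbot
        have hyQ : y ∈ Q := (hQmem y).mpr ⟨1, by rw [pow_one, ← hy, pow_orderOf_eq_one]⟩
        rw [hbot, Subgroup.mem_bot] at hyQ
        rw [hyQ, orderOf_one] at hy
        exact hq.one_lt.ne' hy.symm
      -- K ⊔ Q is normal in G, via the quotient G ⧸ Q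
      have hQ1 : 1 < Nat.card ↥Q := (Subgroup.one_lt_card_iff_ne_bot Q).mpr hQne
      have hind0 : Q.index ≠ 0 := Subgroup.index_ne_zero_of_finite
      have hcardlt : Nat.card (G ⧸ Q) < n := by
        rw [← Subgroup.index_eq_card, ← hn, ← Subgroup.index_mul_card (H := Q)]
        exact (Nat.lt_mul_iff_one_lt_right (Nat.pos_of_ne_zero hind0)).mpr hQ1
      set π := QuotientGroup.mk' Q with hπ
      have hsurj : Function.Surjective π := QuotientGroup.mk'_surjective Q
      have hKmapn : (K.map π).Normal :=
        ih _ hcardlt (G ⧸ Q) rfl (H.map π) (K.map π) (hH.map π hsurj)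
          (Subgroup.map_mono hKH) (subgroupOf_map_normal π hconj)
      have hsupN : (K ⊔ Q).Normal := by
        have hcomap : (K.map π).comap π = K ⊔ Q := by
          rw [Subgroup.comap_map_eq, QuotientGroup.ker_mk']
        rw [← hcomap]
        exact hKmapn.comap π
      -- now prove K is normal
      constructor
      intro k hkK g
      have hxsup : g * k * g⁻¹ ∈ K ⊔ Q := hsupN.conj_mem k (Subgroup.mem_sup_left hkK) g
      have hxH : g * k * g⁻¹ ∈ H := hH.conj_mem k (hKH hkK) g
      have hxord : ¬ q ∣ orderOf (g * k * g⁻¹) := by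
        have hoeq : orderOf (g * k * g⁻¹) = orderOf k := by
          rw [← MulAut.conj_apply]
          exact orderOf_injective (MulAut.conj g).toMonoidHom (MulAut.conj g).injective k
        rw [hoeq]
        intro hdvd
        exact hqK (hdvd.trans (K.orderOf_dvd_natCard hkK))
      -- decompose g * k * g⁻¹ = a * b with a ∈ K, b ∈ Q
      have hxmem : (g * k * g⁻¹) ∈ ((K : Set G) * (Q : Set G)) := by
        rw [← Subgroup.mul_normal K Q]
        exact hxsup
      obtain ⟨a, ha, b, hb, hab⟩ := hxmem
      have hbH : b ∈ H := by
        have hb' : b = a⁻¹ * (g * k * g⁻¹) := by rw [← hab]; group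
        rw [hb']
        exact Subgroup.mul_mem H (Subgroup.inv_mem H (hKH ha)) hxH
      have hcab : Commute a b := by
        apply commutatorElement_eq_one_iff_commute.mp
        apply hKQbot
        · have h1 : b * a⁻¹ * b⁻¹ ∈ K := hconj a⁻¹ (Subgroup.inv_mem K ha) b hbH
          have h2 : a * (b * a⁻¹ * b⁻¹) ∈ K := Subgroup.mul_mem K ha h1
          have he : ⁅a, b⁆ = a * (b * a⁻¹ * b⁻¹) := by group
          rw [he]
          exact h2
        · have h1 : a * b * a⁻¹ ∈ Q := hQnormal.conj_mem b hb a
          have h2 : (a * b * a⁻¹) * b⁻¹ ∈ Q := Subgroup.mul_mem Q h1 (Subgroup.inv_mem Q hb)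
          have he : ⁅a, b⁆ = (a * b * a⁻¹) * b⁻¹ := by group
          rw [he]
          exact h2
      have hbord : ¬ q ∣ orderOf b := by
        intro hdvd
        have hb' : b = a⁻¹ * (g * k * g⁻¹) := by rw [← hab]; group
        have hcax : Commute a⁻¹ (g * k * g⁻¹) := by
          rw [← hab]
          exact ((Commute.refl a).inv_left.mul_right hcab.inv_left)
        have hlcm : orderOf b ∣ Nat.lcm (orderOf a⁻¹) (orderOf (g * k * g⁻¹)) := by
          rw [hb']
          exact hcax.orderOf_mul_dvd_lcm
        have hmul : q ∣ orderOf a⁻¹ * orderOf (g * k * g⁻¹) :=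
          (hdvd.trans hlcm).trans (Nat.lcm_dvd_mul _ _)
        rcases (Nat.Prime.dvd_mul hq).mp hmul with h | h
        · rw [orderOf_inv] at h
          exact hqK (h.trans (K.orderOf_dvd_natCard ha))
        · exact hxord h
      obtain ⟨j, hj⟩ := (hQmem b).mp hb
      have hdvdpow : orderOf b ∣ q ^ j := orderOf_dvd_of_pow_eq_one hj
      obtain ⟨i, hik, hoi⟩ := (Nat.dvd_prime_pow hq).mp hdvdpow
      have hb1 : b = 1 := by
        rcases Nat.eq_zero_or_pos i with h0 | hpos
        · rw [h0, pow_zero] at hoi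
          exact orderOf_eq_one_iff.mp hoi
        · exact absurd (hoi ▸ dvd_pow_self q hpos.ne') hbord
      rw [← hab, hb1]
      simpa using ha

end Main

/-- Best–Taussky: in a finite group all of whose Sylow subgroups are cyclic,
normality is transitive. -/
theorem best_taussky (G : Type*) [Group G] [Finite G]
    (hcyc : ∀ p : ℕ, p.Prime → ∀ P : Sylow p G, IsCyclic P) :
    ∀ H K : Subgroup G, H.Normal → K ≤ H → (K.subgroupOf H).Normal → K.Normal := by
  have : IsZGroup G := ⟨hcyc⟩
  exact best_taussky_aux (Nat.card G) G rfl
end
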